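/- arXiv:1111.2812 — 14 statements merged into one kernel-verified Lean document; each statement's English description precedes it below -/
import Mathlib

section
/- Let (X,d) be a compact metric space, let f : X → X be continuous, and let Λ ⊆ X be closed. If f is open on a neighbourhood of Λ and expanding on a neighbourhood of Λ, then f is ball expanding on a neighbourhood of Λ and locally one-to-one on Λ. -/
open Metric Filter Topology Set

section Defs

variable {X : Type*} [MetricSpace X]

/-- `f` is open at every point of `S`. -/
def OpenOnSet (f : X → X) (S : Set X) : Prop :=
  ∀ x ∈ S, ∀ U ∈ nhds x, f x ∈ interior (f '' U)

/-- `f` is locally one-to-one at every point of `S`. -/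
def LocOneToOneOn (f : X → X) (S : Set X) : Prop :=
  ∀ x ∈ S, ∃ V : Set X, IsOpen V ∧ x ∈ V ∧ Set.InjOn f V

/-- `f` is expanding on `S`. -/
def ExpandingOn (f : X → X) (S : Set X) : Prop :=
  ∃ δ > 0, ∃ μ > 1, ∀ x ∈ S, ∀ y ∈ S, dist x y < δ → μ * dist x y ≤ dist (f x) (f y)

/-- `f` is ball expanding on `S`. -/
def BallExpandingOn (f : X → X) (S : Set X) : Prop :=
  ∃ μ > 1, ∃ ν > 0, ∀ x ∈ S, ∀ ε : ℝ, 0 < ε → ε < ν →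
    Metric.ball (f x) (μ * ε) ⊆ f '' Metric.ball x ε

end Defs

/-! By compactness of `Λ`, the pointwise openness of `f` becomes uniform near `Λ`: for a small
radius `η` there is `ρ > 0` with `B_ρ(f x) ⊆ f(B_η(x))` for all `x` near `Λ`. Choosing `η` within
the scale of expansion, a point `z = f y ∈ B_{με}(f x)` with `y ∈ B_η(x)` satisfies
`μ d(y, x) ≤ d(z, f x) < μ ε`, so `y ∈ B_ε(x)`. Local injectivity is immediate from expansion. -/

-- The tube lemma applied to the compact set `{0} ×ˢ K`.
theorem IsCompact.exists_pos_eventually_nhdsSet {X : Type*} [TopologicalSpace X] {K : Set X}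
    (hK : IsCompact K) {P : ℝ → X → Prop} (h : ∀ a ∈ K, ∀ᶠ p : ℝ × X in 𝓝 (0, a), P p.1 p.2) :
    ∃ r > 0, ∀ᶠ x in 𝓝ˢ K, P r x := by
  have hprod : ∀ᶠ p : ℝ × X in 𝓝ˢ ({0} ×ˢ K), P p.1 p.2 :=
    eventually_nhdsSet_iff_forall.2 <| by
      rintro ⟨r, a⟩ ⟨rfl, ha⟩
      exact h a ha
  rw [isCompact_singleton.nhdsSet_prod_eq hK, nhdsSet_singleton] at hprod
  obtain ⟨r, hP, hr⟩ := ((hprod.curry.filter_mono nhdsWithin_le_nhds).and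
    (self_mem_nhdsWithin (s := Ioi (0 : ℝ)))).exists
  exact ⟨r, hr, hP⟩

section

variable {X : Type*} [MetricSpace X]

theorem IsCompact.exists_pos_eventually_ball_subset {K U : Set X} (hK : IsCompact K)
    (hU : IsOpen U) (hKU : K ⊆ U) : ∃ η > 0, ∀ᶠ x in 𝓝ˢ K, ball x η ⊆ U := by
  refine hK.exists_pos_eventually_nhdsSet fun a ha => ?_
  obtain ⟨ε, hε, haU⟩ := Metric.isOpen_iff.1 hU a (hKU ha)
  rw [nhds_prod_eq]
  filter_upwards [prod_mem_prod (Metric.ball_mem_nhds (0 : ℝ) (half_pos hε))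
    (Metric.ball_mem_nhds a (half_pos hε))] with ⟨η, x⟩ ⟨hη, hx⟩
  refine (ball_subset_ball' ?_).trans haU
  have := (le_abs_self η).trans_lt (mem_ball_zero_iff.1 hη)
  linarith [mem_ball.1 hx]

theorem OpenOnSet.exists_pos_eventually_ball_subset_image {f : X → X} {K U : Set X}
    (hopen : OpenOnSet f U) (hf : Continuous f) (hK : IsCompact K) (hKU : K ⊆ U) {η : ℝ}
    (hη : 0 < η) : ∃ ρ > 0, ∀ᶠ x in 𝓝ˢ K, ball (f x) ρ ⊆ f '' ball x η := by
  refine hK.exists_pos_eventually_nhdsSet fun a ha => ?_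
  obtain ⟨ε, hε, hball⟩ := Metric.mem_nhds_iff.1 <| mem_interior_iff_mem_nhds.1 <|
    hopen a (hKU ha) _ (Metric.ball_mem_nhds a (half_pos hη))
  have hfa : ∀ᶠ x in 𝓝 a, dist (f x) (f a) < ε / 2 ∧ dist x a < η / 2 :=
    ((hf.tendsto a).eventually (Metric.ball_mem_nhds (f a) (half_pos hε))).and
      (Metric.ball_mem_nhds a (half_pos hη))
  rw [nhds_prod_eq]
  filter_upwards [prod_mem_prod (Metric.ball_mem_nhds (0 : ℝ) (half_pos hε)) hfa]
    with ⟨ρ, x⟩ ⟨hρ, hfx, hx⟩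
  have hρ' := (le_abs_self ρ).trans_lt (mem_ball_zero_iff.1 hρ)
  calc ball (f x) ρ ⊆ ball (f a) ε := ball_subset_ball' (by linarith)
    _ ⊆ f '' ball a (η / 2) := hball
    _ ⊆ f '' ball x η := image_mono (ball_subset_ball' (by rw [dist_comm]; linarith))

theorem ExpandingOn.exists_pos_eventually_nhdsSet {f : X → X} {K U : Set X}
    (hexp : ExpandingOn f U) (hK : IsCompact K) (hU : IsOpen U) (hKU : K ⊆ U) :
    ∃ η > 0, ∃ μ > 1, ∀ᶠ x in 𝓝ˢ K, ∀ y ∈ ball x η, μ * dist y x ≤ dist (f y) (f x) := by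
  obtain ⟨δ, hδ, μ, hμ, hexp⟩ := hexp
  obtain ⟨η, hη, hballU⟩ := hK.exists_pos_eventually_ball_subset hU hKU
  refine ⟨min η δ, lt_min hη hδ, μ, hμ, hballU.mono fun x hx y hy => ?_⟩
  have hy' : dist y x < min η δ := hy
  exact hexp y (hx (ball_subset_ball (min_le_left η δ) hy)) x (hx (mem_ball_self hη))
    (hy'.trans_le (min_le_right η δ))

theorem ExpandingOn.locOneToOneOn {f : X → X} {U : Set X} (hexp : ExpandingOn f U)
    (hU : IsOpen U) : LocOneToOneOn f U := by
  obtain ⟨δ, hδ, μ, hμ, hexp⟩ := hexp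
  refine fun x hx => ⟨U ∩ ball x (δ / 2), hU.inter isOpen_ball,
    ⟨hx, mem_ball_self (half_pos hδ)⟩, fun a ha b hb hab => dist_le_zero.1 ?_⟩
  have hab_lt : dist a b < δ := by
    linarith [dist_triangle_right a b x, mem_ball.1 ha.2, mem_ball.1 hb.2]
  have := hexp a ha.1 b hb.1 hab_lt
  rw [hab, dist_self] at this
  nlinarith [dist_nonneg (x := a) (y := b)]

theorem ballExpandingOn_of_expanding_of_ball_subset_image {f : X → X} {S : Set X}
    {η μ ρ : ℝ} (hμ : 1 < μ) (hρ : 0 < ρ)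
    (hexp : ∀ x ∈ S, ∀ y ∈ ball x η, μ * dist y x ≤ dist (f y) (f x))
    (himage : ∀ x ∈ S, ball (f x) ρ ⊆ f '' ball x η) : BallExpandingOn f S := by
  have hμ₀ : 0 < μ := zero_lt_one.trans hμ
  refine ⟨μ, hμ, ρ / μ, div_pos hρ hμ₀, fun x hx ε _ hε z hz => ?_⟩
  have hμε : μ * ε < ρ := by rwa [lt_div_iff₀ hμ₀, mul_comm] at hε
  have hzρ : z ∈ ball (f x) ρ := ball_subset_ball hμε.le hz
  obtain ⟨y, hy, rfl⟩ := himage x hx hzρ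
  refine ⟨y, mem_ball.2 ?_, rfl⟩
  have := (hexp x hx y hy).trans_lt (mem_ball.1 hz)
  exact lt_of_mul_lt_mul_left this hμ₀.le

end

theorem stmt0 {X : Type*} [MetricSpace X] [CompactSpace X] (f : X → X)
    (hf : Continuous f) (Λ : Set X) (hΛ : IsClosed Λ)
    (hopen : ∃ U : Set X, IsOpen U ∧ Λ ⊆ U ∧ OpenOnSet f U)
    (hexp : ∃ U : Set X, IsOpen U ∧ Λ ⊆ U ∧ ExpandingOn f U) :
    (∃ U : Set X, IsOpen U ∧ Λ ⊆ U ∧ BallExpandingOn f U) ∧ LocOneToOneOn f Λ := by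
  obtain ⟨U₁, -, hΛU₁, hopen⟩ := hopen
  obtain ⟨U₂, hU₂, hΛU₂, hexp⟩ := hexp
  obtain ⟨η, hη, μ, hμ, hexpΛ⟩ := hexp.exists_pos_eventually_nhdsSet hΛ.isCompact hU₂ hΛU₂
  obtain ⟨ρ, hρ, himage⟩ :=
    hopen.exists_pos_eventually_ball_subset_image hf hΛ.isCompact hΛU₁ hη
  obtain ⟨W, hW, hΛW, hWsub⟩ := mem_nhdsSet_iff_exists.1 (hexpΛ.and himage)
  refine ⟨⟨W, hW, hΛW, ballExpandingOn_of_expanding_of_ball_subset_image hμ hρ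
    (fun x hx => (hWsub hx).1) (fun x hx => (hWsub hx).2)⟩, fun x hx => ?_⟩
  exact hexp.locOneToOneOn hU₂ x (hΛU₂ hx)
end

section
/- Let (X,d) be a compact metric space, let f : X → X be continuous, and let Λ ⊆ X be closed. If f is ball expanding on a neighbourhood of Λ and locally one-to-one on Λ, then f is open on a neighbourhood of Λ and expanding on a neighbourhood of Λ. -/
open Metric Filter Topology Set

/-! A ball-expanding map sends small balls onto neighbourhoods of the image point, so it is open.
For expansion, take `x`, `y` close together inside a ball on which `f` is injective. Every point
of `ball (f x) (μ * ε)` has a preimage in `ball x ε`, so if `f y` lay in it then injectivity would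
put `y` itself within `ε` of `x`. Letting `ε` increase to `dist x y` gives
`μ * dist x y ≤ dist (f x) (f y)`. A Lebesgue number for the cover of the compact set `Λ` by
injectivity domains gives one radius `ρ` that works uniformly on the `ρ / 2`-thickening of `Λ`. -/

section

variable {X : Type*} [MetricSpace X] {f : X → X}

theorem BallExpandingOn.openOnSet {S : Set X} (h : BallExpandingOn f S) : OpenOnSet f S := by
  obtain ⟨μ, hμ, ν, hν, hbe⟩ := h
  intro x hx U hU
  obtain ⟨ε, hε, hεU⟩ := Metric.mem_nhds_iff.1 hU
  have hε' : 0 < min ε (ν / 2) := lt_min hε (by linarith)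
  have hball : ball (f x) (μ * min ε (ν / 2)) ⊆ f '' U :=
    (hbe x hx _ hε' (by linarith [min_le_right ε (ν / 2)])).trans
      (image_mono ((ball_subset_ball (min_le_left _ _)).trans hεU))
  rw [mem_interior_iff_mem_nhds]
  exact Filter.mem_of_superset (ball_mem_nhds _ (by positivity)) hball

theorem mul_dist_le_dist_of_injOn {V : Set X} {x y : X} {μ : ℝ}
    (hexp : ∀ ε, 0 < ε → ε < dist x y → ball (f x) (μ * ε) ⊆ f '' ball x ε)
    (hinj : InjOn f V) (hxV : ball x (dist x y) ⊆ V) (hy : y ∈ V) :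
    μ * dist x y ≤ dist (f x) (f y) := by
  have hscaled : ∀ ε, 0 < ε → ε < dist x y → μ * ε ≤ dist (f x) (f y) := by
    intro ε hε hεd
    by_contra! hlt
    obtain ⟨y', hy', hfy'⟩ := hexp ε hε hεd (mem_ball'.2 hlt)
    have hy'y : y' = y := hinj (hxV (ball_subset_ball hεd.le hy')) hy hfy'
    rw [hy'y, mem_ball'] at hy'
    linarith
  by_contra! hlt
  have hd : 0 < dist x y := by
    by_contra! hd
    rw [le_antisymm hd dist_nonneg, mul_zero] at hlt
    exact (dist_nonneg.trans_lt hlt).false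
  have hμ : 0 < μ := pos_of_mul_pos_left (dist_nonneg.trans_lt hlt) hd.le
  obtain ⟨ε, hε, hεd⟩ := exists_between ((div_lt_iff₀' hμ).2 hlt)
  have := hscaled ε ((div_nonneg dist_nonneg hμ.le).trans_lt hε) hεd
  rw [div_lt_iff₀' hμ] at hε
  linarith

theorem LocOneToOneOn.exists_injOn_ball {Λ : Set X} (h : LocOneToOneOn f Λ) (hΛ : IsCompact Λ) :
    ∃ ρ > 0, ∀ z ∈ Λ, InjOn f (ball z ρ) := by
  choose V hVopen hmem hinj using h
  obtain ⟨ρ, hρ, hleb⟩ := lebesgue_number_lemma_of_metric hΛ (c := fun z : Λ => V z z.2)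
    (fun z => hVopen z z.2) (fun x hx => mem_iUnion.2 ⟨⟨x, hx⟩, hmem x hx⟩)
  refine ⟨ρ, hρ, fun z hz => ?_⟩
  obtain ⟨w, hw⟩ := hleb z hz
  exact (hinj w w.2).mono hw

theorem BallExpandingOn.expandingOn_inter_thickening {U Λ : Set X} {ρ : ℝ}
    (h : BallExpandingOn f U) (hρ : 0 < ρ) (hinj : ∀ z ∈ Λ, InjOn f (ball z ρ)) :
    ExpandingOn f (U ∩ thickening (ρ / 2) Λ) := by
  obtain ⟨μ, hμ, ν, hν, hbe⟩ := h
  refine ⟨min (ρ / 2) ν, lt_min (by linarith) hν, μ, hμ, ?_⟩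
  rintro x ⟨hxU, hxΛ⟩ y - hxy
  obtain ⟨z, hz, hxz⟩ := mem_thickening_iff.1 hxΛ
  have hxρ : ball x (ρ / 2) ⊆ ball z ρ := by
    intro w hw
    rw [mem_ball] at hw ⊢
    linarith [dist_triangle w x z]
  refine mul_dist_le_dist_of_injOn
    (fun ε hε hεd => hbe x hxU ε hε (hεd.trans_le (hxy.le.trans (min_le_right _ _))))
    (hinj z hz) ((ball_subset_ball (hxy.le.trans (min_le_left _ _))).trans hxρ) (hxρ ?_)
  rw [mem_ball']
  exact hxy.trans_le (min_le_left _ _)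

end

theorem stmt1_general {X : Type*} [MetricSpace X] [CompactSpace X] (f : X → X)
    (Λ : Set X) (hΛ : IsClosed Λ)
    (hball : ∃ U : Set X, IsOpen U ∧ Λ ⊆ U ∧ BallExpandingOn f U)
    (h121 : LocOneToOneOn f Λ) :
    (∃ U : Set X, IsOpen U ∧ Λ ⊆ U ∧ OpenOnSet f U) ∧
    (∃ U : Set X, IsOpen U ∧ Λ ⊆ U ∧ ExpandingOn f U) := by
  obtain ⟨U, hU, hΛU, hbe⟩ := hball
  obtain ⟨ρ, hρ, hinj⟩ := h121.exists_injOn_ball hΛ.isCompact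
  exact ⟨⟨U, hU, hΛU, hbe.openOnSet⟩,
    ⟨U ∩ thickening (ρ / 2) Λ, hU.inter isOpen_thickening,
      subset_inter hΛU (self_subset_thickening (by positivity) Λ),
      hbe.expandingOn_inter_thickening hρ hinj⟩⟩

theorem stmt1 {X : Type*} [MetricSpace X] [CompactSpace X] (f : X → X)
    (hf : Continuous f) (Λ : Set X) (hΛ : IsClosed Λ)
    (hball : ∃ U : Set X, IsOpen U ∧ Λ ⊆ U ∧ BallExpandingOn f U)
    (h121 : LocOneToOneOn f Λ) :
    (∃ U : Set X, IsOpen U ∧ Λ ⊆ U ∧ OpenOnSet f U) ∧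
    (∃ U : Set X, IsOpen U ∧ Λ ⊆ U ∧ ExpandingOn f U) :=
  stmt1_general f Λ hΛ hball h121
end

section
/- Let (X,d) be a compact metric space, let f : X → X be continuous, and let Λ ⊆ X be closed. If f is open on Λ and satisfies property (⋆), then f is ball expanding on Λ. -/
/-! Openness of `f` on the compact set `Λ`, together with continuity, is uniform: there is a
single `ρ > 0` with `B_ρ(f x) ⊆ f(B_δ(x))` for all `x ∈ Λ`. Given `z ∈ B_{με}(f x)` with
`με < ρ`, this yields a preimage `y` of `z` within `δ` of `x`, and property `(⋆)` then gives
`μ d(x, y) ≤ d(f x, z) < με`, so `y ∈ B_ε(x)`. -/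

open Metric Filter Topology Set

section Defs

variable {X : Type*} [MetricSpace X]

/-- property `(⋆)` of `f` with respect to `Λ`. -/
def StarProp (f : X → X) (Λ : Set X) : Prop :=
  ∃ δ > 0, ∃ μ > 1, ∀ x ∈ Λ, ∀ y : X, dist x y < δ → μ * dist x y ≤ dist (f x) (f y)

end Defs

section

variable {X : Type*} [MetricSpace X] {f : X → X}

theorem exists_pos_eventually_ball_subset_image_ball {p : X}
    (hp : ∀ U ∈ 𝓝 p, f p ∈ interior (f '' U)) (hfp : ContinuousAt f p) {δ : ℝ} (hδ : 0 < δ) :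
    ∃ ρ > 0, ∀ᶠ x in 𝓝 p, ball (f x) ρ ⊆ f '' ball x δ := by
  have himage : f '' ball p (δ / 2) ∈ 𝓝 (f p) :=
    mem_interior_iff_mem_nhds.mp (hp _ (ball_mem_nhds p (half_pos hδ)))
  obtain ⟨ρ, hρ, hball⟩ := Metric.mem_nhds_iff.mp himage
  have hnear : ∀ᶠ x in 𝓝 p, dist x p < δ / 2 := ball_mem_nhds p (half_pos hδ)
  have hfnear : ∀ᶠ x in 𝓝 p, dist (f x) (f p) < ρ / 2 :=
    hfp.eventually (ball_mem_nhds (f p) (half_pos hρ))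
  refine ⟨ρ / 2, half_pos hρ, ?_⟩
  filter_upwards [hnear, hfnear] with x hx hfx
  calc ball (f x) (ρ / 2) ⊆ ball (f p) ρ := ball_subset_ball' (by linarith)
    _ ⊆ f '' ball p (δ / 2) := hball
    _ ⊆ f '' ball x δ := image_mono (ball_subset_ball' (by rw [dist_comm]; linarith))

theorem IsCompact.exists_pos_forall_ball_subset_image_ball {Λ : Set X} (hΛ : IsCompact Λ)
    (hf : Continuous f) (hopen : OpenOnSet f Λ) {δ : ℝ} (hδ : 0 < δ) :
    ∃ ρ > 0, ∀ x ∈ Λ, ball (f x) ρ ⊆ f '' ball x δ := by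
  refine hΛ.induction_on (p := fun s => ∃ ρ > 0, ∀ x ∈ s, ball (f x) ρ ⊆ f '' ball x δ)
    ⟨1, one_pos, by simp⟩ ?_ ?_ ?_
  · exact fun s t hst ⟨ρ, hρ, ht⟩ => ⟨ρ, hρ, fun x hx => ht x (hst hx)⟩
  · rintro s t ⟨ρ₁, hρ₁, hs⟩ ⟨ρ₂, hρ₂, ht⟩
    refine ⟨min ρ₁ ρ₂, lt_min hρ₁ hρ₂, ?_⟩
    rintro x (hx | hx)
    · exact (ball_subset_ball (min_le_left _ _)).trans (hs x hx)
    · exact (ball_subset_ball (min_le_right _ _)).trans (ht x hx)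
  · intro p hp
    obtain ⟨ρ, hρ, hev⟩ :=
      exists_pos_eventually_ball_subset_image_ball (hopen p hp) hf.continuousAt hδ
    exact ⟨_, mem_nhdsWithin_of_mem_nhds hev, ρ, hρ, fun x hx => hx⟩

end

theorem stmt2 {X : Type*} [MetricSpace X] [CompactSpace X] (f : X → X)
    (hf : Continuous f) (Λ : Set X) (hΛ : IsClosed Λ)
    (hopen : OpenOnSet f Λ) (hstar : StarProp f Λ) :
    BallExpandingOn f Λ := by
  obtain ⟨δ, hδ, μ, hμ, hexpand⟩ := hstar
  have hμ₀ : 0 < μ := one_pos.trans hμ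
  obtain ⟨ρ, hρ, hball⟩ := hΛ.isCompact.exists_pos_forall_ball_subset_image_ball hf hopen hδ
  refine ⟨μ, hμ, ρ / μ, div_pos hρ hμ₀, fun x hx ε _ hεν z hz => ?_⟩
  have hμε : μ * ε < ρ := (lt_div_iff₀' hμ₀).mp hεν
  obtain ⟨y, hy, rfl⟩ := hball x hx (ball_subset_ball hμε.le hz)
  have hxy : μ * dist x y < μ * ε :=
    (hexpand x hx y (by rw [dist_comm]; exact hy)).trans_lt (by rw [dist_comm]; exact hz)
  exact ⟨y, by rw [mem_ball, dist_comm]; exact lt_of_mul_lt_mul_left hxy hμ₀.le, rfl⟩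
end

section
/- Let (X,d) be a compact metric space, let f : X → X be continuous, and let Λ ⊆ X be closed. If f is ball expanding on Λ and locally one-to-one on Λ, then f satisfies property (⋆). -/
open Metric Filter Topology Set

/-!
Compactness of `Λ` turns local injectivity into a uniform injectivity radius (a Lebesgue number).
If `f y` were closer to `f x` than `μ · d(x, y)` for some `y` inside that radius, ball expansion
would produce a preimage of `f y` strictly closer to `x` than `y`, contradicting injectivity.
-/

theorem IsCompact.exists_pos_forall_injOn_ball {X Y : Type*} [PseudoMetricSpace X] {f : X → Y}
    {K : Set X} (hK : IsCompact K) (hloc : ∀ x ∈ K, ∃ V : Set X, IsOpen V ∧ x ∈ V ∧ InjOn f V) :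
    ∃ δ > 0, ∀ x ∈ K, InjOn f (ball x δ) := by
  choose V hVopen hVmem hVinj using hloc
  obtain ⟨δ, hδ, hleb⟩ := lebesgue_number_lemma_of_metric (c := fun i : K => V i i.2) hK
    (fun i => hVopen i i.2) (fun x hx => mem_iUnion.2 ⟨⟨x, hx⟩, hVmem x hx⟩)
  refine ⟨δ, hδ, fun x hx => ?_⟩
  obtain ⟨i, hi⟩ := hleb x hx
  exact (hVinj i i.2).mono hi

theorem mul_dist_le_dist_of_ball_subset_image {X Y : Type*} [PseudoMetricSpace X]
    [PseudoMetricSpace Y] {f : X → Y} {x : X} {μ ν δ : ℝ}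
    (hball : ∀ ε : ℝ, 0 < ε → ε < ν → ball (f x) (μ * ε) ⊆ f '' ball x ε)
    (hinj : InjOn f (ball x δ)) {y : X} (hy : dist x y < min δ ν) :
    μ * dist x y ≤ dist (f x) (f y) := by
  by_contra! hlt
  have hpos : 0 < dist x y := by
    rcases (dist_nonneg (x := x) (y := y)).eq_or_lt with hzero | hpos
    · rw [← hzero, mul_zero] at hlt
      exact (dist_nonneg.trans_lt hlt).false.elim
    · exact hpos
  have hyδ : dist x y < δ := hy.trans_le (min_le_left _ _)
  obtain ⟨z, hz, hfz⟩ := hball (dist x y) hpos (hy.trans_le (min_le_right _ _))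
    (by rwa [mem_ball, dist_comm])
  have hzy : z = y :=
    hinj (mem_ball.2 ((mem_ball.1 hz).trans hyδ)) (by rwa [mem_ball, dist_comm]) hfz
  rw [hzy, mem_ball, dist_comm] at hz
  exact hz.false

theorem stmt3_general {X : Type*} [MetricSpace X] [CompactSpace X] (f : X → X)
    (Λ : Set X) (hΛ : IsClosed Λ)
    (hball : BallExpandingOn f Λ) (h121 : LocOneToOneOn f Λ) :
    StarProp f Λ := by
  obtain ⟨μ, hμ, ν, hν, hexp⟩ := hball
  obtain ⟨δ, hδ, hinj⟩ := hΛ.isCompact.exists_pos_forall_injOn_ball h121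
  exact ⟨min δ ν, lt_min hδ hν, μ, hμ, fun x hx y hy =>
    mul_dist_le_dist_of_ball_subset_image (hexp x hx) (hinj x hx) hy⟩

theorem stmt3 {X : Type*} [MetricSpace X] [CompactSpace X] (f : X → X)
    (hf : Continuous f) (Λ : Set X) (hΛ : IsClosed Λ)
    (hball : BallExpandingOn f Λ) (h121 : LocOneToOneOn f Λ) :
    StarProp f Λ :=
  stmt3_general f Λ hΛ hball h121
end

section
/- Let (X,d) be a compact metric space, let f : X → X be continuous, and let Λ ⊆ X be closed. If f has s-limit shadowing on Λ, then f has limit shadowing on Λ. -/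
open Metric Filter Topology Set

section Defs

variable {X : Type*} [MetricSpace X]

/-- `x` is a `δ`-pseudo-orbit for `f`. -/
def IsPseudoOrbit (f : X → X) (δ : ℝ) (x : ℕ → X) : Prop :=
  ∀ n : ℕ, dist (f (x n)) (x (n + 1)) < δ

/-- `x` is an asymptotic pseudo-orbit for `f`. -/
def IsAsymptoticOrbit (f : X → X) (x : ℕ → X) : Prop :=
  Filter.Tendsto (fun n => dist (f (x n)) (x (n + 1))) Filter.atTop (nhds 0)

/-- the point `y` `ε`-shadows the sequence `x`. -/
def Shadows (f : X → X) (ε : ℝ) (y : X) (x : ℕ → X) : Prop :=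
  ∀ n : ℕ, dist (f^[n] y) (x n) < ε

/-- the point `y` asymptotically shadows the sequence `x`. -/
def AsympShadows (f : X → X) (y : X) (x : ℕ → X) : Prop :=
  Filter.Tendsto (fun n => dist (f^[n] y) (x n)) Filter.atTop (nhds 0)

/-- `f` has shadowing on `Y`. -/
def ShadowingOn (f : X → X) (Y : Set X) : Prop :=
  ∀ ε > 0, ∃ δ > 0, ∀ x : ℕ → X, (∀ n, x n ∈ Y) → IsPseudoOrbit f δ x →
    ∃ y : X, Shadows f ε y x

/-- `f` has h-shadowing on `Y`. -/
def HShadowingOn (f : X → X) (Y : Set X) : Prop :=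
  ∀ ε > 0, ∃ δ > 0, ∀ (x : ℕ → X) (m : ℕ), (∀ i ≤ m, x i ∈ Y) →
    (∀ i < m, dist (f (x i)) (x (i + 1)) < δ) →
    ∃ y : X, (∀ i < m, dist (f^[i] y) (x i) < ε) ∧ f^[m] y = x m

/-- `f` has limit shadowing on `Y`. -/
def LimitShadowingOn (f : X → X) (Y : Set X) : Prop :=
  ∀ x : ℕ → X, (∀ n, x n ∈ Y) → IsAsymptoticOrbit f x → ∃ y : X, AsympShadows f y x

/-- `f` has s-limit shadowing on `Y`. -/
def SLimitShadowingOn (f : X → X) (Y : Set X) : Prop :=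
  ∀ ε > 0, ∃ δ > 0,
    (∀ x : ℕ → X, (∀ n, x n ∈ Y) → IsPseudoOrbit f δ x → ∃ y : X, Shadows f ε y x) ∧
    (∀ x : ℕ → X, (∀ n, x n ∈ Y) → IsPseudoOrbit f δ x → IsAsymptoticOrbit f x →
      ∃ y : X, Shadows f ε y x ∧ AsympShadows f y x)

end Defs

/-!
Given an asymptotic pseudo-orbit `x` in `Λ`, its jumps are eventually below `δ / 2`, where `δ`
is the s-limit shadowing constant for `ε = 1`. By compactness `x` returns close to itself at
late times: `x (N + s)` is within `δ / 2` of `x N`. Replacing `x 0, …, x (N - 1)` by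
`x s, …, x (N - 1 + s)` gives a `δ`-pseudo-orbit in `Λ` that is still asymptotic and agrees
with `x` from time `N` on, so the point that asymptotically shadows it also shadows `x`.
-/

section Splice

variable {α : Type*}

def prependShifted (x : ℕ → α) (N s : ℕ) : ℕ → α :=
  fun n => if n < N then x (n + s) else x n

variable {x : ℕ → α} {N s n : ℕ}

lemma prependShifted_of_lt (h : n < N) : prependShifted x N s n = x (n + s) := if_pos h

lemma prependShifted_of_le (h : N ≤ n) : prependShifted x N s n = x n := if_neg (not_lt.mpr h)

lemma prependShifted_eventuallyEq : prependShifted x N s =ᶠ[atTop] x :=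
  eventually_atTop.mpr ⟨N, fun _ => prependShifted_of_le⟩

lemma prependShifted_mem {Y : Set α} (hx : ∀ n, x n ∈ Y) (n : ℕ) :
    prependShifted x N s n ∈ Y := by
  unfold prependShifted
  split_ifs <;> apply hx

end Splice

section Shadowing

variable {X : Type*} [MetricSpace X] {f : X → X}

lemma exists_ge_dist_add_lt [CompactSpace X] (x : ℕ → X) {ε : ℝ} (hε : 0 < ε) (M : ℕ) :
    ∃ N ≥ M, ∃ s ≥ M, dist (x (N + s)) (x N) < ε := by
  obtain ⟨_, φ, hφ, hlim⟩ := CompactSpace.tendsto_subseq x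
  obtain ⟨K, hK⟩ := Metric.cauchySeq_iff.mp hlim.cauchySeq ε hε
  set k := max K M
  set j := K + φ k + M
  have hk : M ≤ φ k := (le_max_right K M).trans (hφ.id_le k)
  have hj : j ≤ φ j := hφ.id_le j
  refine ⟨φ k, hk, φ j - φ k, by omega, ?_⟩
  rw [Nat.add_sub_cancel' (by omega)]
  exact hK j (by omega) k (le_max_left K M)

lemma isPseudoOrbit_prependShifted {x : ℕ → X} {δ : ℝ} {M N s : ℕ}
    (hjump : ∀ n ≥ M, dist (f (x n)) (x (n + 1)) < δ / 2) (hNM : M ≤ N) (hsM : M ≤ s)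
    (hreturn : dist (x (N + s)) (x N) < δ / 2) :
    IsPseudoOrbit f δ (prependShifted x N s) := by
  have hδ : 0 < δ := by linarith [dist_nonneg.trans_lt hreturn]
  intro n
  rcases lt_trichotomy (n + 1) N with h | h | h
  · rw [prependShifted_of_lt (by omega), prependShifted_of_lt h, add_right_comm]
    linarith [hjump (n + s) (by omega)]
  · rw [prependShifted_of_lt (by omega), prependShifted_of_le h.ge, h]
    have hlast : n + s + 1 = N + s := by omega
    calc dist (f (x (n + s))) (x N)
        ≤ dist (f (x (n + s))) (x (N + s)) + dist (x (N + s)) (x N) := dist_triangle _ _ _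
      _ < δ / 2 + δ / 2 := add_lt_add (hlast ▸ hjump (n + s) (by omega)) hreturn
      _ = δ := add_halves δ
  · rw [prependShifted_of_le (by omega), prependShifted_of_le (by omega)]
    linarith [hjump n (by omega)]

lemma IsAsymptoticOrbit.congr {x w : ℕ → X} (hx : IsAsymptoticOrbit f x) (h : x =ᶠ[atTop] w) :
    IsAsymptoticOrbit f w := by
  refine Tendsto.congr' ?_ hx
  filter_upwards [h, (tendsto_add_atTop_nat 1).eventually h] with n hn hn1
  rw [hn, hn1]

lemma AsympShadows.congr {x w : ℕ → X} {y : X} (hy : AsympShadows f y x) (h : x =ᶠ[atTop] w) :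
    AsympShadows f y w :=
  Tendsto.congr' (h.mono fun n hn => by rw [hn]) hy

end Shadowing

theorem stmt4_general {X : Type*} [MetricSpace X] [CompactSpace X] (f : X → X)
    (Λ : Set X) (hs : SLimitShadowingOn f Λ) :
    LimitShadowingOn f Λ := by
  intro x hxΛ hx
  obtain ⟨δ, hδ, -, hasymp⟩ := hs 1 one_pos
  obtain ⟨M, hjump⟩ := eventually_atTop.mp (hx.eventually_lt_const (half_pos hδ))
  obtain ⟨N, hNM, s, hsM, hreturn⟩ := exists_ge_dist_add_lt x (half_pos hδ) M
  have hspliced : prependShifted x N s =ᶠ[atTop] x := prependShifted_eventuallyEq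
  obtain ⟨y, -, hy⟩ := hasymp _ (prependShifted_mem hxΛ)
    (isPseudoOrbit_prependShifted hjump hNM hsM hreturn) (hx.congr hspliced.symm)
  exact ⟨y, hy.congr hspliced⟩

theorem stmt4 {X : Type*} [MetricSpace X] [CompactSpace X] (f : X → X)
    (hf : Continuous f) (Λ : Set X) (hΛ : IsClosed Λ)
    (hs : SLimitShadowingOn f Λ) :
    LimitShadowingOn f Λ :=
  stmt4_general f Λ hs
end

section
/- Let (X,d) be a compact metric space, let f : X → X be continuous, and let Λ ⊆ X be closed. If there is an open set U with Λ ⊆ U such that f has h-shadowing on U, then f has s-limit shadowing on Λ. -/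
open Metric Filter Topology Set

/-!
Fix `c > 0` and let `δₖ` be the h-shadowing constant for precision `c / 2ᵏ`. Given an
asymptotic pseudo-orbit `x` in `Λ`, choose times `N₀ < N₁ < ⋯` after which its errors are below
`δₖ₊₁`. Inductively, h-shadow the orbit of the previous point up to `Nₖ` followed by `x` on
`[Nₖ, Nₖ₊₁]`: the new point ends exactly on `x`, moves the old orbit by less than `c / 2ᵏ⁺¹`, and
stays in `U` because `U` contains a uniform neighbourhood of the compact set `Λ`. On the `j`-th
block of times the accumulated error is below `2c / 2ʲ`, uniformly in the stage, so a limit point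
of these finite shadowing points (compactness) shadows `x` with errors tending to `0`.
-/

section Compactness

variable {X : Type*} [TopologicalSpace X] [CompactSpace X] {f : X → X}

theorem exists_forall_iterate_mem_of_forall_lt (hf : Continuous f) {C : ℕ → Set X}
    (hC : ∀ i, IsClosed (C i)) (h : ∀ m, ∃ y, ∀ i < m, f^[i] y ∈ C i) :
    ∃ y, ∀ i, f^[i] y ∈ C i := by
  let K : ℕ → Set X := fun m => ⋂ i < m, f^[i] ⁻¹' C i
  have hK : ∀ m, IsClosed (K m) := fun m =>
    isClosed_biInter fun i _ => (hC i).preimage (hf.iterate i)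
  obtain ⟨y, hy⟩ := IsCompact.nonempty_iInter_of_sequence_nonempty_isCompact_isClosed K
    (fun m => biInter_subset_biInter_left fun i hi => Nat.lt_succ_of_lt hi)
    (fun m => (h m).imp fun y hy => mem_iInter₂.2 hy) (hK 0).isCompact hK
  exact ⟨y, fun i => mem_iInter₂.1 (mem_iInter.1 hy (i + 1)) i i.lt_succ_self⟩

end Compactness

section HShadowing

variable {X : Type*} [MetricSpace X] {f : X → X} {U : Set X} {ε δ : ℝ}

def HShadowingWith (f : X → X) (U : Set X) (ε δ : ℝ) : Prop :=
  ∀ (x : ℕ → X) (m : ℕ), (∀ i ≤ m, x i ∈ U) → (∀ i < m, dist (f (x i)) (x (i + 1)) < δ) →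
    ∃ y : X, (∀ i < m, dist (f^[i] y) (x i) < ε) ∧ f^[m] y = x m

theorem HShadowingWith.exists_forall_dist_le [CompactSpace X] (hf : Continuous f)
    (h : HShadowingWith f U ε δ) {x : ℕ → X} (hxU : ∀ i, x i ∈ U) (hx : IsPseudoOrbit f δ x) :
    ∃ y, ∀ i, dist (f^[i] y) (x i) ≤ ε := by
  obtain ⟨y, hy⟩ := exists_forall_iterate_mem_of_forall_lt hf
    (C := fun i => closedBall (x i) ε) (fun _ => isClosed_closedBall) fun m => by
      obtain ⟨y, hy, -⟩ := h x m (fun i _ => hxU i) fun i _ => hx i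
      exact ⟨y, fun i hi => mem_closedBall.2 (hy i hi).le⟩
  exact ⟨y, fun i => mem_closedBall.1 (hy i)⟩

theorem HShadowingWith.exists_splice (h : HShadowingWith f U ε δ) (hε : 0 < ε)
    {x : ℕ → X} {z : X} {n m : ℕ} (hnm : n ≤ m) (hz : f^[n] z = x n)
    (hzU : ∀ i ≤ n, f^[i] z ∈ U) (hxU : ∀ i, x i ∈ U)
    (hx : ∀ i, n ≤ i → dist (f (x i)) (x (i + 1)) < δ) :
    ∃ z', (∀ i ≤ n, dist (f^[i] z') (f^[i] z) < ε) ∧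
      (∀ i ≤ m, n < i → dist (f^[i] z') (x i) < ε) ∧ f^[m] z' = x m := by
  set w : ℕ → X := fun i => if i ≤ n then f^[i] z else x i
  have hwx : ∀ i, n ≤ i → w i = x i := fun i hi => by
    rcases hi.eq_or_lt with rfl | hi
    · simp [w, hz]
    · simp [w, hi.not_ge]
  have hwU : ∀ i ≤ m, w i ∈ U := fun i _ => by
    by_cases hi : i ≤ n
    · simpa [w, hi] using hzU i hi
    · simpa [w, hi] using hxU i
  have hw : ∀ i < m, dist (f (w i)) (w (i + 1)) < δ := fun i _ => by
    rcases lt_or_ge i n with hi | hi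
    · have hfw : f (w i) = w (i + 1) := by
        simp [w, hi.le, Nat.succ_le_of_lt hi, Function.iterate_succ_apply']
      rw [hfw, dist_self]
      exact dist_nonneg.trans_lt (hx n le_rfl)
    · rw [hwx i hi, hwx (i + 1) (hi.trans i.le_succ)]
      exact hx i hi
  obtain ⟨z', hz'w, hz'm⟩ := h w m hwU hw
  have hclose : ∀ i ≤ m, dist (f^[i] z') (w i) < ε := fun i hi => by
    rcases hi.lt_or_eq with hi | rfl
    · exact hz'w i hi
    · rwa [hz'm, dist_self]
  refine ⟨z', fun i hi => ?_, fun i hi hni => ?_, hz'm.trans (hwx m hnm)⟩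
  · simpa [w, hi] using hclose i (hi.trans hnm)
  · simpa [hwx i hni.le] using hclose i hi

variable {x : ℕ → X} {N : ℕ → ℕ} {c : ℝ} {δ : ℕ → ℝ}

/-- `∀ l < j, N l < i` says that time `i` lies in the `j`-th block `(N (j - 1), N j]` or later. -/
theorem exists_iterate_eq_and_dist_lt (hc : 0 < c) (hN : StrictMono N)
    (hδ : ∀ k, HShadowingWith f U (c / 2 ^ k) (δ k))
    (hU : ∀ i p, dist p (x i) < 2 * c → p ∈ U)
    (hx₀ : IsPseudoOrbit f (δ 0) x)
    (hxN : ∀ k i, N k ≤ i → dist (f (x i)) (x (i + 1)) < δ (k + 1)) (k : ℕ) :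
    ∃ z, f^[N k] z = x (N k) ∧ ∀ i ≤ N k, ∀ j ≤ k, (∀ l < j, N l < i) →
      dist (f^[i] z) (x i) < 2 * (c / 2 ^ j) - c / 2 ^ k := by
  have hxU : ∀ i, x i ∈ U := fun i => hU i (x i) (by simpa using hc)
  induction k with
  | zero =>
    obtain ⟨z, hz₀, hzx, hzN⟩ := (hδ 0).exists_splice (by positivity) (Nat.zero_le (N 0))
      (z := x 0) rfl (fun i hi => by simpa [Nat.le_zero.1 hi] using hxU 0) hxU fun i _ => hx₀ i
    refine ⟨z, hzN, fun i hi j hj _ => ?_⟩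
    obtain rfl := Nat.le_zero.1 hj
    rw [two_mul, add_sub_cancel_right]
    rcases i.eq_zero_or_pos with rfl | hi₀
    · simpa using hz₀ 0 le_rfl
    · simpa using hzx i hi hi₀
  | succ k ih =>
    obtain ⟨z, hzN, hz⟩ := ih
    have hzU : ∀ i ≤ N k, f^[i] z ∈ U := fun i hi => hU i _ <| by
      have hz₀ := hz i hi 0 k.zero_le (by simp)
      rw [pow_zero, div_one] at hz₀
      linarith [(by positivity : 0 < c / 2 ^ k)]
    obtain ⟨z', hz'z, hz'x, hz'N⟩ := (hδ (k + 1)).exists_splice (by positivity)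
      (hN.monotone k.le_succ) hzN hzU hxU (hxN k)
    refine ⟨z', hz'N, fun i hi j hj hji => ?_⟩
    have hhalf : c / 2 ^ k = 2 * (c / 2 ^ (k + 1)) := by rw [pow_succ]; ring
    rcases le_or_gt i (N k) with hik | hki
    · have hjk : j ≤ k := by
        rcases hj.lt_or_eq with hj | rfl
        · exact Nat.lt_succ_iff.1 hj
        · exact absurd (hji k k.lt_succ_self) hik.not_gt
      calc dist (f^[i] z') (x i) ≤ dist (f^[i] z') (f^[i] z) + dist (f^[i] z) (x i) :=
            dist_triangle _ _ _
        _ < c / 2 ^ (k + 1) + (2 * (c / 2 ^ j) - c / 2 ^ k) :=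
            add_lt_add (hz'z i hik) (hz i hik j hjk hji)
        _ = 2 * (c / 2 ^ j) - c / 2 ^ (k + 1) := by rw [hhalf]; ring
    · have hcj : c / 2 ^ (k + 1) ≤ c / 2 ^ j := by gcongr; exact one_le_two
      linarith [hz'x i hi hki]

theorem exists_forall_dist_iterate_le [CompactSpace X] (hf : Continuous f) (hc : 0 < c)
    (hN : StrictMono N) (hδ : ∀ k, HShadowingWith f U (c / 2 ^ k) (δ k))
    (hU : ∀ i p, dist p (x i) < 2 * c → p ∈ U)
    (hx₀ : IsPseudoOrbit f (δ 0) x)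
    (hxN : ∀ k i, N k ≤ i → dist (f (x i)) (x (i + 1)) < δ (k + 1)) :
    ∃ y, ∀ i j, (∀ l < j, N l < i) → dist (f^[i] y) (x i) ≤ 2 * (c / 2 ^ j) := by
  obtain ⟨y, hy⟩ := exists_forall_iterate_mem_of_forall_lt hf
    (C := fun i => ⋂ j, ⋂ (_ : ∀ l < j, N l < i), closedBall (x i) (2 * (c / 2 ^ j)))
    (fun i => isClosed_iInter fun j => isClosed_iInter fun _ => isClosed_closedBall) fun m => by
      obtain ⟨z, -, hz⟩ := exists_iterate_eq_and_dist_lt hc hN hδ hU hx₀ hxN m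
      refine ⟨z, fun i hi => mem_iInter₂.2 fun j hji => mem_closedBall.2 ?_⟩
      have hji' : j ≤ i := by
        by_contra! hij
        exact (hji i hij).not_ge (hN.id_le i)
      have : 0 < c / 2 ^ m := by positivity
      linarith [hz i (hi.le.trans (hN.id_le m)) j (by omega) hji]
  exact ⟨y, fun i j hji => mem_closedBall.1 (mem_iInter₂.1 (hy i) j hji)⟩

theorem exists_forall_dist_iterate_le_and_asympShadows [CompactSpace X] (hf : Continuous f)
    (hc : 0 < c) (hδ₀ : ∀ k, 0 < δ k) (hδ : ∀ k, HShadowingWith f U (c / 2 ^ k) (δ k))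
    (hU : ∀ i p, dist p (x i) < 2 * c → p ∈ U) (hx : IsPseudoOrbit f (δ 0) x)
    (hasym : IsAsymptoticOrbit f x) :
    ∃ y, (∀ i, dist (f^[i] y) (x i) ≤ 2 * c) ∧ AsympShadows f y x := by
  obtain ⟨N, hN, hxN⟩ := extraction_forall_of_eventually fun k =>
    eventually_forall_ge_atTop.2 (hasym.eventually (gt_mem_nhds (hδ₀ (k + 1))))
  obtain ⟨y, hy⟩ := exists_forall_dist_iterate_le hf hc hN hδ hU hx hxN
  refine ⟨y, fun i => by simpa using hy i 0 (by simp), ?_⟩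
  have hlim : Tendsto (fun j : ℕ => 2 * (c / 2 ^ j)) atTop (𝓝 0) := by
    have := (tendsto_pow_atTop_nhds_zero_of_lt_one (by norm_num : (0 : ℝ) ≤ 1 / 2)
      (by norm_num)).const_mul (2 * c)
    rw [mul_zero] at this
    exact this.congr fun j => by rw [one_div_pow]; ring
  refine tendsto_order.2 ⟨fun a ha => .of_forall fun i => ha.trans_le dist_nonneg,
    fun ρ hρ => ?_⟩
  obtain ⟨K, hK⟩ := (hlim.eventually (gt_mem_nhds hρ)).exists
  filter_upwards [eventually_gt_atTop (N K)] with i hi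
  exact (hy i K fun l hl => (hN hl).trans hi).trans_lt hK

end HShadowing

theorem stmt5 {X : Type*} [MetricSpace X] [CompactSpace X] (f : X → X)
    (hf : Continuous f) (Λ : Set X) (hΛ : IsClosed Λ)
    (U : Set X) (hU : IsOpen U) (hΛU : Λ ⊆ U)
    (hh : HShadowingOn f U) :
    SLimitShadowingOn f Λ := by
  intro ε hε
  obtain ⟨r, hr, hrU⟩ := hΛ.isCompact.exists_thickening_subset_open hU hΛU
  obtain ⟨c, hc, hcε, hcr⟩ : ∃ c : ℝ, 0 < c ∧ 2 * c < ε ∧ 2 * c ≤ r :=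
    ⟨min ε r / 4, by positivity, by linarith [min_le_left ε r], by linarith [min_le_right ε r]⟩
  choose δ hδ₀ hδ using fun k : ℕ => hh (c / 2 ^ k) (by positivity)
  have hnbhd : ∀ x : ℕ → X, (∀ n, x n ∈ Λ) → ∀ i p, dist p (x i) < 2 * c → p ∈ U :=
    fun x hx i p hp => hrU (mem_thickening_iff.2 ⟨x i, hx i, hp.trans_le hcr⟩)
  refine ⟨δ 0, hδ₀ 0, fun x hxΛ hx => ?_, fun x hxΛ hx hasym => ?_⟩
  · obtain ⟨y, hy⟩ := HShadowingWith.exists_forall_dist_le hf (hδ 0) (fun i => hΛU (hxΛ i)) hx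
    exact ⟨y, fun i => (hy i).trans_lt (by simp only [pow_zero, div_one]; linarith)⟩
  · obtain ⟨y, hy, hasy⟩ :=
      exists_forall_dist_iterate_le_and_asympShadows hf hc hδ₀ hδ (hnbhd x hxΛ) hx hasym
    exact ⟨y, fun i => (hy i).trans_lt hcε, hasy⟩
end

section
/- Let (X,d) be a compact metric space, let f : X → X be continuous, and let Λ ⊆ X be closed and invariant (f(Λ) ⊆ Λ). If the restriction of f to Λ has h-shadowing (as a map of the compact metric space Λ), then the restriction of f to Λ has s-limit shadowing and limit shadowing. -/
open Metric Filter Topology Set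

/-! h-shadowing shadows a finite pseudo-orbit by a point that lands *exactly* on its last term;
shadowing then follows by compactness. For an asymptotic pseudo-orbit, cut time into blocks
`[N k, N (k + 1))` beyond which the jumps are below the h-shadowing constant for `ε / 2 ^ (k + 1)`.
Because the shadowing point of the first `k` blocks hits the pseudo-orbit exactly at `N k`, its true
orbit followed by the next block is again a pseudo-orbit, whose shadowing point moves the earlier
orbit by less than `ε / 2 ^ (k + 1)`. These points converge, and their limit shadows the
pseudo-orbit with errors tending to zero.
For limit shadowing, compactness gives an almost closed loop late along the pseudo-orbit; running
around it long enough before following the tail gives a genuine δ-pseudo-orbit which eventually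
agrees with a time shift of the given one. -/

open Function

theorem exists_seq_of_forall_exists_succ {α : Type*} {P : ℕ → α → Prop} {R : ℕ → α → α → Prop}
    {a : α} (ha : P 0 a) (h : ∀ k a, P k a → ∃ b, P (k + 1) b ∧ R k a b) :
    ∃ u : ℕ → α, ∀ k, P k (u k) ∧ R k (u k) (u (k + 1)) := by
  choose F hFP hFR using h
  let v : (k : ℕ) → {b // P k b} := fun k =>
    Nat.rec ⟨a, ha⟩ (fun k b => ⟨F k b b.2, hFP k b b.2⟩) k
  exact ⟨fun k => (v k).1, fun k => ⟨(v k).2, hFR k _ (v k).2⟩⟩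

theorem StrictMono.exists_le_lt_succ {N : ℕ → ℕ} (hN : StrictMono N) {i : ℕ} (hi : N 0 ≤ i) :
    ∃ j, N j ≤ i ∧ i < N (j + 1) := by
  classical
  have hex : ∃ j, i < N (j + 1) := ⟨i, i.lt_succ_self.trans_le hN.le_apply⟩
  refine ⟨Nat.find hex, ?_, Nat.find_spec hex⟩
  rcases h : Nat.find hex with _ | j
  · exact hi
  · exact not_lt.1 (Nat.find_min hex (h ▸ j.lt_succ_self))

theorem dist_le_of_le_geometric_two_of_tendsto_of_ge {α : Type*} [PseudoMetricSpace α]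
    {u : ℕ → α} {a : α} {C : ℝ} {j : ℕ} (ha : Tendsto u atTop (𝓝 a))
    (hu : ∀ k ≥ j, dist (u k) (u (k + 1)) ≤ C / 2 / 2 ^ k) :
    dist (u j) a ≤ C / 2 ^ j := by
  have hv : ∀ k, dist (u (k + j)) (u (k + 1 + j)) ≤ C / 2 ^ j / 2 / 2 ^ k := fun k => by
    have := hu (k + j) (Nat.le_add_left j k)
    rwa [Nat.add_right_comm, pow_add, ← div_div, div_right_comm _ (2 ^ k), div_right_comm _ 2] at this
  simpa using dist_le_of_le_geometric_two_of_tendsto₀ (C := C / 2 ^ j) hv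
    ((tendsto_add_atTop_iff_nat j).2 ha)

theorem exists_dist_lt_of_compactSpace {A : Type*} [PseudoMetricSpace A] [CompactSpace A] (x : ℕ → A)
    {ε : ℝ} (hε : 0 < ε) (M : ℕ) : ∃ m n, M ≤ m ∧ m < n ∧ dist (x n) (x m) < ε := by
  obtain ⟨p, φ, hφ, hp⟩ := CompactSpace.tendsto_subseq x
  obtain ⟨J, hJ⟩ := Metric.cauchySeq_iff.1 hp.cauchySeq ε hε
  exact ⟨φ (J + M), φ (J + M + 1), (Nat.le_add_left M J).trans hφ.le_apply,
    hφ (J + M).lt_succ_self, hJ _ (by omega) _ (by omega)⟩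

section Shadowing

variable {A : Type*} [MetricSpace A] {g : A → A}

theorem isPseudoOrbit_mod {x : ℕ → A} {δ : ℝ} {q : ℕ}
    (hx : ∀ i < q, dist (g (x i)) (x (i + 1)) < δ) (hloop : dist (g (x q)) (x 0) < δ) :
    IsPseudoOrbit g δ (fun n => x (n % (q + 1))) := by
  intro n
  rcases (Nat.lt_add_one_iff.1 (Nat.mod_lt n (show 0 < q + 1 by omega))).lt_or_eq with h | h
  · have hsucc : (n + 1) % (q + 1) = n % (q + 1) + 1 := by
      rw [Nat.add_mod_eq_ite, Nat.mod_eq_of_lt (show 1 < q + 1 by omega), if_neg (by omega)]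
    simpa only [hsucc] using hx _ h
  · simpa only [h, Nat.succ_mod_succ_eq_zero_iff.2 h] using hloop

theorem IsPseudoOrbit.append {u v : ℕ → A} {δ : ℝ} (hu : IsPseudoOrbit g δ u)
    (hv : IsPseudoOrbit g δ v) {T : ℕ} (hT : u T = v 0) :
    IsPseudoOrbit g δ (fun n => if n < T then u n else v (n - T)) := by
  intro n
  rcases lt_trichotomy (n + 1) T with h | h | h
  · simpa [h, n.lt_succ_self.trans h] using hu n
  · simpa [h, ← hT, (by omega : n < T)] using hu n
  · have hn : ¬ n < T := by omega
    have hn' : ¬ n + 1 < T := by omega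
    have hsub : n + 1 - T = n - T + 1 := by omega
    simpa only [hn, hn', hsub, if_false] using hv (n - T)

theorem IsAsymptoticOrbit.exists_strictMono_dist_lt {x : ℕ → A} (hx : IsAsymptoticOrbit g x)
    {δ : ℕ → ℝ} (hδ : ∀ k, 0 < δ k) (hx₀ : IsPseudoOrbit g (δ 0) x) :
    ∃ N : ℕ → ℕ, StrictMono N ∧ N 0 = 0 ∧
      ∀ k n, N k ≤ n → dist (g (x n)) (x (n + 1)) < δ k := by
  obtain ⟨φ, hφ, hφδ⟩ := extraction_forall_of_eventually fun k =>
    eventually_forall_ge_atTop.2 (hx.eventually (gt_mem_nhds (hδ k)))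
  refine ⟨fun k => if k = 0 then 0 else φ k, strictMono_nat_of_lt_succ fun k => ?_, rfl,
    fun k n hn => ?_⟩
  · rcases k with _ | k
    · simpa using (Nat.zero_le _).trans_lt (hφ Nat.zero_lt_one)
    · simpa using hφ (k + 1).lt_succ_self
  · rcases k with _ | k
    · exact hx₀ n
    · exact hφδ (k + 1) n hn

theorem IsAsymptoticOrbit.exists_isPseudoOrbit_shift_eq [CompactSpace A] {x : ℕ → A}
    (hx : IsAsymptoticOrbit g x) {δ : ℝ} (hδ : 0 < δ) :
    ∃ (w : ℕ → A) (d s : ℕ), IsPseudoOrbit g δ w ∧ ∀ n ≥ s, w (n + d) = x n := by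
  obtain ⟨M, hM⟩ := eventually_atTop.1 (hx.eventually (gt_mem_nhds (half_pos hδ)))
  obtain ⟨s, t, hMs, hst, hclose⟩ := exists_dist_lt_of_compactSpace x (half_pos hδ) M
  obtain ⟨q, rfl⟩ : ∃ q, t = s + q + 1 := ⟨t - s - 1, by omega⟩
  have htail : IsPseudoOrbit g δ (fun n => x (s + n)) := fun n =>
    (hM (s + n) (by omega)).trans (half_lt_self hδ)
  have hloop : dist (g (x (s + q))) (x (s + 0)) < δ :=
    calc dist (g (x (s + q))) (x (s + 0))
        ≤ dist (g (x (s + q))) (x (s + q + 1)) + dist (x (s + q + 1)) (x s) := dist_triangle ..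
      _ < δ / 2 + δ / 2 := add_lt_add (hM _ (by omega)) hclose
      _ = δ := add_halves δ
  have hloops := isPseudoOrbit_mod (x := fun n => x (s + n)) (fun i _ => htail i) hloop
  -- go around the loop `x s, …, x (s + q)` `s` times, then follow `x` from time `s`
  refine ⟨_, q * s, s, hloops.append htail (T := (q + 1) * s) (by simp), fun n hn => ?_⟩
  rw [if_neg (by rw [add_one_mul]; omega)]
  congr 1
  rw [add_one_mul]
  omega

theorem exists_forall_dist_iterate_le_of_finite [CompactSpace A] (hg : Continuous g)
    {x : ℕ → A} {ε : ℝ} (h : ∀ m, ∃ y, ∀ i < m, dist (g^[i] y) (x i) ≤ ε) :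
    ∃ y, ∀ n, dist (g^[n] y) (x n) ≤ ε := by
  choose z hz using h
  obtain ⟨y, φ, hφ, hy⟩ := CompactSpace.tendsto_subseq z
  refine ⟨y, fun n => le_of_tendsto (((hg.iterate n).tendsto y).comp hy |>.dist
    tendsto_const_nhds) ?_⟩
  filter_upwards [eventually_gt_atTop n] with j hj
  exact hz _ n (hj.trans_le hφ.le_apply)

theorem HShadowingOn.shadowingOn [CompactSpace A] (hh : HShadowingOn g univ)
    (hg : Continuous g) : ShadowingOn g univ := by
  intro ε hε
  obtain ⟨δ, hδ, H⟩ := hh (ε / 2) (half_pos hε)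
  refine ⟨δ, hδ, fun x _ hx => ?_⟩
  obtain ⟨y, hy⟩ := exists_forall_dist_iterate_le_of_finite hg fun m =>
    have ⟨y, hy, _⟩ := H x m (fun _ _ => mem_univ _) fun i _ => hx i
    ⟨y, fun i hi => (hy i hi).le⟩
  exact ⟨y, fun n => (hy n).trans_lt (half_lt_self hε)⟩

theorem HShadowingOn.exists_continuation (hh : HShadowingOn g univ) {ε : ℝ} (hε : 0 < ε) :
    ∃ δ > 0, ∀ (x : ℕ → A) (y : A) (n m : ℕ), n < m → g^[n] y = x n →
      (∀ i, n ≤ i → i < m → dist (g (x i)) (x (i + 1)) < δ) →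
      ∃ y', g^[m] y' = x m ∧ (∀ i ≤ n, dist (g^[i] y) (g^[i] y') < ε) ∧
        ∀ i, n ≤ i → i < m → dist (g^[i] y') (x i) < ε := by
  obtain ⟨δ, hδ, H⟩ := hh ε hε
  refine ⟨δ, hδ, fun x y n m hnm hy hx => ?_⟩
  set w : ℕ → A := fun i => if i ≤ n then g^[i] y else x i
  have hw_le : ∀ i ≤ n, w i = g^[i] y := fun i hi => if_pos hi
  have hw_ge : ∀ i, n ≤ i → w i = x i := fun i hi => by
    rcases hi.eq_or_lt with rfl | hi
    · exact (if_pos le_rfl).trans hy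
    · exact if_neg hi.not_ge
  obtain ⟨y', hy'w, hy'm⟩ := H w m (fun _ _ => mem_univ _) fun i hi => by
    rcases lt_or_ge i n with hin | hin
    · rw [hw_le i hin.le, hw_le (i + 1) hin, iterate_succ_apply', dist_self]
      exact hδ
    · rw [hw_ge i hin, hw_ge (i + 1) (hin.trans i.le_succ)]
      exact hx i hin hi
  refine ⟨y', (hw_ge m hnm.le) ▸ hy'm, fun i hi => ?_, fun i hi him => ?_⟩
  · simpa [dist_comm, hw_le i hi] using hy'w i (hi.trans_lt hnm)
  · simpa [hw_ge i hi] using hy'w i him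

theorem exists_shadows_asympShadows_of_approx [CompactSpace A] (hg : Continuous g)
    {x : ℕ → A} {N : ℕ → ℕ} (hN : StrictMono N) (hN0 : N 0 = 0) {Z : ℕ → A} {ε : ℝ}
    (hε : 0 < ε) (hZ : ∀ k, ∀ i ≤ N k, dist (g^[i] (Z k)) (g^[i] (Z (k + 1))) ≤ ε / 2 / 2 ^ k)
    (hZx : ∀ k i, N k ≤ i → i < N (k + 1) → dist (g^[i] (Z (k + 1))) (x i) < ε / 2 / 2 ^ k) :
    ∃ y, Shadows g ε y x ∧ AsympShadows g y x := by
  obtain ⟨y, hy⟩ := cauchySeq_tendsto_of_complete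
    (cauchySeq_of_le_geometric_two fun k => hZ k 0 (Nat.zero_le _))
  have hblock : ∀ j i, N j ≤ i → i < N (j + 1) → dist (g^[i] y) (x i) < ε / 2 ^ j := by
    intro j i hji hij
    have hlim : dist (g^[i] (Z (j + 1))) (g^[i] y) ≤ ε / 2 ^ (j + 1) :=
      dist_le_of_le_geometric_two_of_tendsto_of_ge (((hg.iterate i).tendsto y).comp hy)
        fun k hk => hZ k i (hij.le.trans (hN.monotone hk))
    calc dist (g^[i] y) (x i)
        ≤ dist (g^[i] (Z (j + 1))) (g^[i] y) + dist (g^[i] (Z (j + 1))) (x i) :=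
          dist_triangle_left ..
      _ < ε / 2 ^ (j + 1) + ε / 2 / 2 ^ j := add_lt_add_of_le_of_lt hlim (hZx j i hji hij)
      _ = ε / 2 ^ j := by rw [pow_succ]; ring
  have htail : ∀ j i, N j ≤ i → dist (g^[i] y) (x i) < ε / 2 ^ j := by
    intro j i hi
    obtain ⟨k, hki, hik⟩ := hN.exists_le_lt_succ (hN0.trans_le i.zero_le)
    have hjk : j ≤ k := Nat.lt_succ_iff.1 (hN.lt_iff_lt.1 (hi.trans_lt hik))
    exact (hblock k i hki hik).trans_le
      (div_le_div_of_nonneg_left hε.le (by positivity) (pow_le_pow_right₀ one_le_two hjk))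
  refine ⟨y, fun i => by simpa using htail 0 i (hN0.trans_le i.zero_le), ?_⟩
  refine Metric.tendsto_atTop.2 fun η hη => ?_
  obtain ⟨j, hj⟩ := exists_pow_lt_of_lt_one (div_pos hη hε) one_half_lt_one
  refine ⟨N j, fun i hi => ?_⟩
  rw [Real.dist_0_eq_abs, abs_of_nonneg dist_nonneg]
  calc dist (g^[i] y) (x i) < ε / 2 ^ j := htail j i hi
    _ = ε * (1 / 2) ^ j := by rw [one_div_pow, mul_one_div]
    _ < η := by rwa [lt_div_iff₀' hε] at hj

theorem HShadowingOn.exists_shadows_asympShadows [CompactSpace A] (hh : HShadowingOn g univ)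
    (hg : Continuous g) {ε : ℝ} (hε : 0 < ε) :
    ∃ δ > 0, ∀ x, IsPseudoOrbit g δ x → IsAsymptoticOrbit g x →
      ∃ y, Shadows g ε y x ∧ AsympShadows g y x := by
  choose δ hδ hcont using fun k : ℕ => hh.exists_continuation (ε := ε / 2 / 2 ^ k) (by positivity)
  refine ⟨δ 0, hδ 0, fun x hx hxa => ?_⟩
  obtain ⟨N, hN, hN0, hNδ⟩ := hxa.exists_strictMono_dist_lt hδ hx
  obtain ⟨Z, hZ⟩ := exists_seq_of_forall_exists_succ (P := fun k z => g^[N k] z = x (N k))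
    (R := fun k z z' => (∀ i ≤ N k, dist (g^[i] z) (g^[i] z') < ε / 2 / 2 ^ k) ∧
      ∀ i, N k ≤ i → i < N (k + 1) → dist (g^[i] z') (x i) < ε / 2 / 2 ^ k)
    (a := x 0) (by simp [hN0]) fun k z hz =>
      hcont k x z (N k) (N (k + 1)) (hN k.lt_succ_self) hz fun i hi _ => hNδ k i hi
  exact exists_shadows_asympShadows_of_approx hg hN hN0 hε (fun k i hi => ((hZ k).2.1 i hi).le)
    fun k => (hZ k).2.2

theorem HShadowingOn.sLimitShadowingOn [CompactSpace A] (hh : HShadowingOn g univ)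
    (hg : Continuous g) : SLimitShadowingOn g univ := by
  intro ε hε
  obtain ⟨δ₁, hδ₁, H₁⟩ := hh.shadowingOn hg ε hε
  obtain ⟨δ₂, hδ₂, H₂⟩ := hh.exists_shadows_asympShadows hg hε
  refine ⟨min δ₁ δ₂, lt_min hδ₁ hδ₂, fun x hxY hx => ?_, fun x _ hx hxa => ?_⟩
  · exact H₁ x hxY fun n => (hx n).trans_le (min_le_left _ _)
  · exact H₂ x (fun n => (hx n).trans_le (min_le_right _ _)) hxa

theorem HShadowingOn.limitShadowingOn [CompactSpace A] (hh : HShadowingOn g univ)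
    (hg : Continuous g) : LimitShadowingOn g univ := by
  intro x _ hx
  obtain ⟨δ, hδ, H⟩ := hh.exists_shadows_asympShadows hg one_pos
  obtain ⟨w, d, s, hw, hwx⟩ := hx.exists_isPseudoOrbit_shift_eq hδ
  have hwa : IsAsymptoticOrbit g w := by
    refine (tendsto_add_atTop_iff_nat d).1 (hx.congr' ?_)
    filter_upwards [eventually_ge_atTop s] with n hn
    rw [hwx n hn, Nat.add_right_comm, hwx (n + 1) (hn.trans n.le_succ)]
  obtain ⟨y, -, hy⟩ := H w hw hwa
  refine ⟨g^[d] y, ((tendsto_add_atTop_iff_nat d).2 hy).congr' ?_⟩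
  filter_upwards [eventually_ge_atTop s] with n hn
  rw [← iterate_add_apply, hwx n hn]

end Shadowing

theorem stmt6 {X : Type*} [MetricSpace X] [CompactSpace X] (f : X → X)
    (hf : Continuous f) (Λ : Set X) (hΛ : IsClosed Λ)
    (hinv : Set.MapsTo f Λ Λ)
    (hh : HShadowingOn (hinv.restrict f Λ Λ) Set.univ) :
    SLimitShadowingOn (hinv.restrict f Λ Λ) Set.univ ∧
      LimitShadowingOn (hinv.restrict f Λ Λ) Set.univ := by
  have : CompactSpace Λ := isCompact_iff_compactSpace.mp hΛ.isCompact
  have hg : Continuous (hinv.restrict f Λ Λ) := hf.restrict hinv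
  exact ⟨hh.sLimitShadowingOn hg, hh.limitShadowingOn hg⟩
end

section
/- Let (X,d) be a compact metric space and let f : X → X be continuous and positively expansive. Then f has shadowing if and only if f has h-shadowing. -/
open Metric Filter Topology Set

section Defs

variable {X : Type*} [MetricSpace X]

/-- `f` is positively expansive. -/
def PositivelyExpansive (f : X → X) : Prop :=
  ∃ b > 0, ∀ x y : X, (∀ n : ℕ, dist (f^[n] x) (f^[n] y) < b) → x = y

end Defs

/-!
Shadowing ⇒ h-shadowing: continue a finite pseudo-orbit `x₀, …, xₘ` by the true orbit of `xₘ`.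
A point shadowing this infinite pseudo-orbit within the expansivity constant has an `m`-th
iterate whose whole forward orbit stays close to that of `xₘ`, so by positive expansivity
it hits `xₘ` exactly.

h-shadowing ⇒ shadowing: shadow longer and longer finite pieces of an infinite pseudo-orbit
within `ε / 2`; the closed sets of such shadowing points are nested and nonempty, so by
compactness some point lies in all of them.
-/

section Extension

variable {X : Type*} (f : X → X) (x : ℕ → X) (m : ℕ)

def extendByOrbit : ℕ → X := fun n => if n ≤ m then x n else f^[n - m] (x m)

theorem extendByOrbit_of_le {n : ℕ} (hn : n ≤ m) : extendByOrbit f x m n = x n :=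
  if_pos hn

theorem extendByOrbit_add (k : ℕ) : extendByOrbit f x m (m + k) = f^[k] (x m) := by
  rcases Nat.eq_zero_or_pos k with rfl | hk
  · exact extendByOrbit_of_le f x m le_rfl
  · simp only [extendByOrbit, if_neg (by omega : ¬m + k ≤ m), Nat.add_sub_cancel_left]

theorem extendByOrbit_mem {Y : Set X} (hY : MapsTo f Y Y) (hx : ∀ i ≤ m, x i ∈ Y) (n : ℕ) :
    extendByOrbit f x m n ∈ Y := by
  rcases le_or_gt n m with hn | hn
  · rw [extendByOrbit_of_le f x m hn]
    exact hx n hn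
  · obtain ⟨k, rfl⟩ := Nat.exists_eq_add_of_le hn.le
    rw [extendByOrbit_add]
    exact hY.iterate k (hx m le_rfl)

theorem isPseudoOrbit_extendByOrbit [MetricSpace X] {δ : ℝ} (hδ : 0 < δ)
    (hx : ∀ i < m, dist (f (x i)) (x (i + 1)) < δ) :
    IsPseudoOrbit f δ (extendByOrbit f x m) := by
  intro n
  rcases lt_or_ge n m with hn | hn
  · rw [extendByOrbit_of_le f x m hn.le, extendByOrbit_of_le f x m hn]
    exact hx n hn
  · obtain ⟨k, rfl⟩ := Nat.exists_eq_add_of_le hn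
    rw [extendByOrbit_add, add_assoc, extendByOrbit_add, Function.iterate_succ_apply',
      dist_self]
    exact hδ

end Extension

section

variable {X : Type*} [MetricSpace X] {f : X → X} {Y : Set X}

theorem ShadowingOn.hShadowingOn (hs : ShadowingOn f Y) (hY : MapsTo f Y Y)
    (hexp : PositivelyExpansive f) : HShadowingOn f Y := by
  intro ε hε
  obtain ⟨b, hb, hexp⟩ := hexp
  obtain ⟨δ, hδ, hsh⟩ := hs (min ε b) (lt_min hε hb)
  refine ⟨δ, hδ, fun x m hxY hx => ?_⟩
  obtain ⟨y, hy⟩ := hsh (extendByOrbit f x m) (extendByOrbit_mem f x m hY hxY)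
    (isPseudoOrbit_extendByOrbit f x m hδ hx)
  refine ⟨y, fun i hi => ?_, hexp _ _ fun k => ?_⟩
  · have := hy i
    rw [extendByOrbit_of_le f x m hi.le] at this
    exact this.trans_le (min_le_left _ _)
  · have := hy (m + k)
    rw [extendByOrbit_add, add_comm, Function.iterate_add_apply] at this
    exact this.trans_le (min_le_right _ _)

theorem exists_forall_dist_iterate_le_of_forall_finite [CompactSpace X] (hf : Continuous f)
    {x : ℕ → X} {ε : ℝ} (h : ∀ m, ∃ y, ∀ i < m, dist (f^[i] y) (x i) ≤ ε) :
    ∃ y, ∀ n, dist (f^[n] y) (x n) ≤ ε := by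
  set t : ℕ → Set X := fun m => ⋂ i < m, {y | dist (f^[i] y) (x i) ≤ ε}
  have ht_closed : ∀ m, IsClosed (t m) := fun m =>
    isClosed_biInter fun i _ => isClosed_le ((hf.iterate i).dist continuous_const)
      continuous_const
  have ht_anti : ∀ m, t (m + 1) ⊆ t m := fun m =>
    biInter_subset_biInter_left fun i (hi : i < m) => Nat.lt_succ_of_lt hi
  have ht_nonempty : ∀ m, (t m).Nonempty := fun m => by
    obtain ⟨y, hy⟩ := h m
    exact ⟨y, mem_iInter₂.2 hy⟩
  obtain ⟨y, hy⟩ := IsCompact.nonempty_iInter_of_sequence_nonempty_isCompact_isClosed t ht_anti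
    ht_nonempty (ht_closed 0).isCompact ht_closed
  exact ⟨y, fun n => mem_iInter₂.1 (mem_iInter.1 hy (n + 1)) n n.lt_succ_self⟩

theorem HShadowingOn.shadowingOn_s10 [CompactSpace X] (hf : Continuous f) (hh : HShadowingOn f Y) :
    ShadowingOn f Y := by
  intro ε hε
  obtain ⟨δ, hδ, hsh⟩ := hh (ε / 2) (half_pos hε)
  refine ⟨δ, hδ, fun x hxY hx => ?_⟩
  have hfinite : ∀ m, ∃ y, ∀ i < m, dist (f^[i] y) (x i) ≤ ε / 2 := fun m => by
    obtain ⟨y, hy, -⟩ := hsh x m (fun i _ => hxY i) (fun i _ => hx i)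
    exact ⟨y, fun i hi => (hy i hi).le⟩
  obtain ⟨y, hy⟩ := exists_forall_dist_iterate_le_of_forall_finite hf hfinite
  exact ⟨y, fun n => (hy n).trans_lt (half_lt_self hε)⟩

end

theorem stmt10 {X : Type*} [MetricSpace X] [CompactSpace X] (f : X → X)
    (hf : Continuous f) (hexp : PositivelyExpansive f) :
    ShadowingOn f Set.univ ↔ HShadowingOn f Set.univ :=
  ⟨fun hs => hs.hShadowingOn (mapsTo_univ f univ) hexp, fun hh => hh.shadowingOn_s10 hf⟩
end

section
/- Let (X,d) be a compact metric space and let f : X → X be continuous, surjective and c-expansive. Then f has shadowing if and only if f has s-limit shadowing. -/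
open Metric Filter Topology Set

section Defs

variable {X : Type*} [MetricSpace X]

/-- `f` is c-expansive. -/
def CExpansive (f : X → X) : Prop :=
  ∃ b > 0, ∀ xo yo : ℤ → X,
    (∀ m : ℤ, f (xo m) = xo (m + 1)) → (∀ m : ℤ, f (yo m) = yo (m + 1)) →
    (∀ m : ℤ, dist (xo m) (yo m) < b) → xo 0 = yo 0

end Defs

/-! By compactness of the space of pairs of full orbits, c-expansivity is uniform: two full orbits
that stay `b/2`-close on a long enough window `[-N, N]` are `ε`-close at time `0`. Now let `y`
shadow an asymptotic pseudo-orbit `x` with error at most `b/4`. Far along, the tail of `x` from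
time `n - N` is a pseudo-orbit of arbitrarily small jumps, so it is shadowed by some `z` with error
at most `min (b/4) (ε/2)`; the full orbits through `f^[n-N] y` and `z` are then `b/2`-close on
`[0, 2N]`, whence `f^[n] y` is `ε/2`-close to `f^[N] z`, which is `ε/2`-close to `x n`. -/

section FullOrbits

variable {X : Type*}

def IsFullOrbit (f : X → X) (xo : ℤ → X) : Prop :=
  ∀ m : ℤ, f (xo m) = xo (m + 1)

theorem exists_isFullOrbit_iterate {f : X → X} (hsur : Function.Surjective f) (y : X) :
    ∃ xo : ℤ → X, IsFullOrbit f xo ∧ ∀ n : ℕ, xo n = f^[n] y := by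
  set g := Function.surjInv hsur
  have hfg : ∀ a, f (g a) = a := Function.surjInv_eq hsur
  let xo : ℤ → X
    | Int.ofNat n => f^[n] y
    | Int.negSucc n => g^[n + 1] y
  refine ⟨xo, ?_, fun n => rfl⟩
  rintro (n | _ | n)
  · exact (Function.iterate_succ_apply' f n y).symm
  · exact hfg y
  · rw [show Int.negSucc (n + 1) + 1 = Int.negSucc n by omega]
    exact (congrArg f (Function.iterate_succ_apply' g (n + 1) y)).trans (hfg _)

theorem IsFullOrbit.shift {f : X → X} {xo : ℤ → X} (h : IsFullOrbit f xo) (k : ℤ) :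
    IsFullOrbit f fun m => xo (k + m) :=
  fun m => by rw [h, add_assoc]

theorem isClosed_setOf_isFullOrbit [TopologicalSpace X] [T2Space X] {f : X → X}
    (hf : Continuous f) : IsClosed {xo : ℤ → X | IsFullOrbit f xo} := by
  simp only [IsFullOrbit, Set.ofPred_forall]
  exact isClosed_iInter fun m => isClosed_eq (hf.comp (continuous_apply m)) (continuous_apply _)

end FullOrbits

section Expansivity

variable {X : Type*} [MetricSpace X]

def IsCExpansivityConstant (f : X → X) (b : ℝ) : Prop :=
  ∀ xo yo : ℤ → X, IsFullOrbit f xo → IsFullOrbit f yo →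
    (∀ m : ℤ, dist (xo m) (yo m) < b) → xo 0 = yo 0

theorem IsCExpansivityConstant.exists_forall_window_dist_le [CompactSpace X] {f : X → X}
    {b b' ε : ℝ} (hf : Continuous f) (hb : IsCExpansivityConstant f b) (hb' : b' < b)
    (hε : 0 < ε) :
    ∃ N : ℕ, ∀ xo yo : ℤ → X, IsFullOrbit f xo → IsFullOrbit f yo →
      (∀ m : ℤ, |m| ≤ N → dist (xo m) (yo m) ≤ b') → dist (xo 0) (yo 0) < ε := by
  by_contra! hbad
  set S : ℕ → Set ((ℤ → X) × (ℤ → X)) := fun N =>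
    Prod.fst ⁻¹' {xo | IsFullOrbit f xo} ∩ Prod.snd ⁻¹' {yo | IsFullOrbit f yo} ∩
      (⋂ m : ℤ, ⋂ (_ : |m| ≤ N), {p | dist (p.1 m) (p.2 m) ≤ b'}) ∩
      {p | ε ≤ dist (p.1 0) (p.2 0)}
  have hdist : ∀ m : ℤ, Continuous fun p : (ℤ → X) × (ℤ → X) => dist (p.1 m) (p.2 m) :=
    fun m => ((continuous_apply m).comp continuous_fst).dist
      ((continuous_apply m).comp continuous_snd)
  have hS_closed : ∀ N, IsClosed (S N) := fun N =>
    (((isClosed_setOf_isFullOrbit hf).preimage continuous_fst).inter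
      ((isClosed_setOf_isFullOrbit hf).preimage continuous_snd)).inter
      (isClosed_iInter fun m => isClosed_iInter fun _ =>
        isClosed_le (hdist m) continuous_const) |>.inter
      (isClosed_le continuous_const (hdist 0))
  have hS_anti : ∀ N, S (N + 1) ⊆ S N := by
    rintro N p ⟨⟨hfull, hwin⟩, hfar⟩
    refine ⟨⟨hfull, ?_⟩, hfar⟩
    simp only [Set.mem_iInter] at hwin ⊢
    exact fun m hm => hwin m (by push_cast; linarith)
  have hS_ne : ∀ N, (S N).Nonempty := by
    intro N
    obtain ⟨xo, yo, hxo, hyo, hwin, hfar⟩ := hbad N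
    exact ⟨(xo, yo), ⟨⟨⟨hxo, hyo⟩, Set.mem_iInter₂.2 hwin⟩, hfar⟩⟩
  obtain ⟨p, hp⟩ := IsCompact.nonempty_iInter_of_sequence_nonempty_isCompact_isClosed S
    hS_anti hS_ne (hS_closed 0).isCompact hS_closed
  simp only [Set.mem_iInter] at hp
  have hclose : ∀ m : ℤ, dist (p.1 m) (p.2 m) < b := fun m =>
    ((hp m.natAbs).1.2 |> Set.mem_iInter₂.1) m (by simp) |>.trans_lt hb'
  have hsame := hb p.1 p.2 (hp 0).1.1.1 (hp 0).1.1.2 hclose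
  have hfar := (hp 0).2
  rw [Set.mem_ofPred_eq, hsame, dist_self] at hfar
  exact hfar.not_gt hε

end Expansivity

section Shadowing

variable {X : Type*} [MetricSpace X] {f : X → X}

theorem Shadows.mono {ε ε' : ℝ} {y : X} {x : ℕ → X} (h : Shadows f ε y x) (hεε' : ε ≤ ε') :
    Shadows f ε' y x :=
  fun n => (h n).trans_le hεε'

theorem IsAsymptoticOrbit.eventually_isPseudoOrbit_shift {x : ℕ → X} (hx : IsAsymptoticOrbit f x)
    {δ : ℝ} (hδ : 0 < δ) : ∀ᶠ k in atTop, IsPseudoOrbit f δ fun j => x (k + j) := by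
  obtain ⟨M, hM⟩ := eventually_atTop.1 (hx.eventually (gt_mem_nhds hδ))
  filter_upwards [eventually_ge_atTop M] with k hk j
  exact hM (k + j) (by omega)

theorem ShadowingOn.asympShadows [CompactSpace X] (hf : Continuous f)
    (hsur : Function.Surjective f) (hsh : ShadowingOn f univ) {b ε₁ : ℝ}
    (hb : IsCExpansivityConstant f b) (hε₁ : ε₁ ≤ b / 4) {x : ℕ → X} {y : X}
    (hx : IsAsymptoticOrbit f x) (hy : Shadows f ε₁ y x) : AsympShadows f y x := by
  have hb0 : 0 < b := by linarith [hy 0, dist_nonneg (x := f^[0] y) (y := x 0)]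
  refine Metric.tendsto_nhds.2 fun ε hε => ?_
  obtain ⟨N, hN⟩ := hb.exists_forall_window_dist_le hf (b' := b / 2) (by linarith) (half_pos hε)
  set η := min (b / 4) (ε / 2)
  obtain ⟨δ, hδ, hδsh⟩ := hsh η (by positivity)
  obtain ⟨M, hM⟩ := eventually_atTop.1 (hx.eventually_isPseudoOrbit_shift hδ)
  filter_upwards [eventually_ge_atTop (M + N)] with n hn
  obtain ⟨z, hz⟩ := hδsh _ (fun _ => trivial) (hM (n - N) (by omega))
  obtain ⟨yo, hyo, hyo_iter⟩ := exists_isFullOrbit_iterate hsur (f^[n - N] y)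
  obtain ⟨zo, hzo, hzo_iter⟩ := exists_isFullOrbit_iterate hsur z
  have hyo_x : ∀ i : ℕ, dist (yo i) (x (n - N + i)) < ε₁ := fun i => by
    rw [hyo_iter, ← Function.iterate_add_apply, add_comm]
    exact hy _
  have hzo_x : ∀ i : ℕ, dist (zo i) (x (n - N + i)) < η := fun i => by
    rw [hzo_iter]
    exact hz i
  have hclose : ∀ i : ℕ, dist (yo i) (zo i) ≤ b / 2 := fun i => by
    linarith [dist_triangle_right (yo i) (zo i) (x (n - N + i)), hyo_x i, hzo_x i,
      min_le_left (b / 4) (ε / 2)]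
  have hmid : dist (yo N) (zo N) < ε / 2 := by
    have hwin : ∀ m : ℤ, |m| ≤ N → dist (yo (N + m)) (zo (N + m)) ≤ b / 2 := by
      intro m hm
      have hm_ge : -(N : ℤ) ≤ m := (abs_le.1 hm).1
      obtain ⟨i, hi⟩ : ∃ i : ℕ, (i : ℤ) = N + m := ⟨(N + m).toNat, by omega⟩
      simpa only [← hi] using hclose i
    simpa using hN _ _ (hyo.shift N) (hzo.shift N) hwin
  have hyo_N : yo N = f^[n] y := by
    rw [hyo_iter, ← Function.iterate_add_apply]
    congr 1
    omega
  rw [Real.dist_0_eq_abs, abs_of_nonneg dist_nonneg, ← hyo_N]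
  have hzo_N : dist (zo N) (x n) < ε / 2 := by
    simpa [show n - N + N = n by omega] using (hzo_x N).trans_le (min_le_right _ _)
  linarith [dist_triangle (yo N) (zo N) (x n)]

end Shadowing

theorem stmt11 {X : Type*} [MetricSpace X] [CompactSpace X] (f : X → X)
    (hf : Continuous f) (hsur : Function.Surjective f) (hexp : CExpansive f) :
    ShadowingOn f Set.univ ↔ SLimitShadowingOn f Set.univ := by
  refine ⟨fun hsh ε hε => ?_, fun hs ε hε => ?_⟩
  · obtain ⟨b, hb, hexpb⟩ := hexp
    obtain ⟨δ, hδ, hδsh⟩ := hsh (min ε (b / 4)) (by positivity)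
    refine ⟨δ, hδ, fun x hx hpo => ?_, fun x hx hpo hasym => ?_⟩
    · obtain ⟨y, hy⟩ := hδsh x hx hpo
      exact ⟨y, hy.mono (min_le_left _ _)⟩
    · obtain ⟨y, hy⟩ := hδsh x hx hpo
      exact ⟨y, hy.mono (min_le_left _ _),
        hsh.asympShadows hf hsur hexpb (min_le_right _ _) hasym hy⟩
  · obtain ⟨δ, hδ, hsh, -⟩ := hs ε hε
    exact ⟨δ, hδ, hsh⟩
end

section
/- Let (X,d) be a compact metric space, let f : X → X be continuous, and let M ⊆ X. If f is ball expanding on M, then f has h-shadowing on M. -/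
/-! Backward induction along the pseudo-orbit: if `y'` has `f^[m] y' = x (m + 1)` and its orbit
stays `ε`-close to `x 1, …, x (m + 1)`, then `y'` lies in `B_{με}(f (x 0))` because
`d(f (x 0), x 1) < (μ - 1) ε`, so ball expansion at `x 0` yields `z ∈ B_ε(x 0)` with `f z = y'`. -/

open Metric Filter Topology Set

section

variable {X : Type*} [MetricSpace X]

theorem exists_iterate_eq_of_ball_subset_image {f : X → X} {M : Set X} {μ ε : ℝ} (hε : 0 < ε)
    (hexp : ∀ x ∈ M, ball (f x) (μ * ε) ⊆ f '' ball x ε) (m : ℕ) (x : ℕ → X)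
    (hxM : ∀ i ≤ m, x i ∈ M) (hpo : ∀ i < m, dist (f (x i)) (x (i + 1)) < (μ - 1) * ε) :
    ∃ y, (∀ i ≤ m, dist (f^[i] y) (x i) < ε) ∧ f^[m] y = x m := by
  induction m generalizing x with
  | zero => exact ⟨x 0, fun i hi => by simp [Nat.le_zero.mp hi, hε], rfl⟩
  | succ m ih =>
    obtain ⟨y', hclose, hend⟩ := ih (fun i => x (i + 1))
      (fun i hi => hxM (i + 1) (by omega)) (fun i hi => hpo (i + 1) (by omega))
    have hy' : y' ∈ ball (f (x 0)) (μ * ε) := by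
      have h₁ : dist y' (x 1) < ε := by simpa using hclose 0 (Nat.zero_le _)
      have h₂ : dist (f (x 0)) (x 1) < (μ - 1) * ε := hpo 0 (Nat.succ_pos _)
      rw [mem_ball]
      calc dist y' (f (x 0)) ≤ dist y' (x 1) + dist (f (x 0)) (x 1) := dist_triangle_right _ _ _
        _ < ε + (μ - 1) * ε := add_lt_add h₁ h₂
        _ = μ * ε := by ring
    obtain ⟨z, hz, hfz⟩ := hexp (x 0) (hxM 0 (Nat.zero_le _)) hy'
    refine ⟨z, ?_, by rw [Function.iterate_succ_apply, hfz, hend]⟩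
    rintro (_ | i) hi
    · simpa using hz
    · rw [Function.iterate_succ_apply, hfz]
      exact hclose i (by omega)

end

theorem stmt13_general {X : Type*} [MetricSpace X] (f : X → X)
    (M : Set X) (hball : BallExpandingOn f M) :
    HShadowingOn f M := by
  obtain ⟨μ, hμ, ν, hν, hB⟩ := hball
  intro ε hε
  obtain ⟨ε', hε', hε'min⟩ := exists_between (lt_min hε hν)
  obtain ⟨hε'ε, hε'ν⟩ := lt_min_iff.mp hε'min
  refine ⟨(μ - 1) * ε', mul_pos (by linarith) hε', fun x m hxM hpo => ?_⟩
  obtain ⟨y, hclose, hend⟩ := exists_iterate_eq_of_ball_subset_image hε'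
    (fun x hx => hB x hx ε' hε' hε'ν) m x hxM hpo
  exact ⟨y, fun i hi => (hclose i hi.le).trans hε'ε, hend⟩

theorem stmt13 {X : Type*} [MetricSpace X] [CompactSpace X] (f : X → X)
    (hf : Continuous f) (M : Set X) (hball : BallExpandingOn f M) :
    HShadowingOn f M :=
  stmt13_general f M hball
end

section
/- Let (X,d) be a compact metric space and let f : X → X be continuous. If f is open (on all of X) and expanding (on all of X), then f has h-shadowing. -/
/-!
An open map of a compact space is uniformly open, so for an open expanding map every point `z`
close enough to `f x` has a preimage `y` with `dist y x ≤ dist z (f x) / μ`. Shadowing a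
`δ`-pseudo-orbit `x₀, …, xₘ` then works backwards from `xₘ`: pulling the current point back
along `xᵢ` keeps it within `η` of `xᵢ`, because `(η + δ) / μ ≤ η` once `δ ≤ (μ - 1) η`.
-/

open Metric Filter Topology Set

theorem OpenOnSet.isOpenMap {X : Type*} [MetricSpace X] {f : X → X} (h : OpenOnSet f univ) :
    IsOpenMap f :=
  fun U hU => isOpen_iff_mem_nhds.2 <| by
    rintro _ ⟨x, hx, rfl⟩
    exact mem_interior_iff_mem_nhds.1 (h x (mem_univ x) U (hU.mem_nhds hx))

theorem IsOpenMap.exists_ball_subset_image_ball {X Y : Type*} [MetricSpace X] [CompactSpace X]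
    [MetricSpace Y] {f : X → Y} (hf : Continuous f) (ho : IsOpenMap f) {ε : ℝ} (hε : 0 < ε) :
    ∃ β > 0, ∀ x, ball (f x) β ⊆ f '' ball x ε := by
  -- `ball (f x) β` is empty for `β ≤ 0`, so it is enough that the inclusion holds near `β = 0`.
  have hloc : ∀ y, ∀ᶠ p : ℝ × X in 𝓝 (0, y), ball (f p.2) p.1 ⊆ f '' ball p.2 ε := by
    intro y
    obtain ⟨r, hr, hsub⟩ :=
      Metric.mem_nhds_iff.1 (ho.image_mem_nhds (ball_mem_nhds y (half_pos hε)))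
    have hβ : ∀ᶠ p : ℝ × X in 𝓝 (0, y), p.1 < r / 2 :=
      (continuous_fst.tendsto _).eventually (eventually_lt_nhds (half_pos hr))
    have hfy : ∀ᶠ p : ℝ × X in 𝓝 (0, y), dist (f p.2) (f y) < r / 2 :=
      ((hf.comp continuous_snd).tendsto _).eventually (ball_mem_nhds _ (half_pos hr))
    have hy : ∀ᶠ p : ℝ × X in 𝓝 (0, y), dist p.2 y < ε / 2 :=
      (continuous_snd.tendsto _).eventually (ball_mem_nhds _ (half_pos hε))
    filter_upwards [hβ, hfy, hy] with p hβ hfy hy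
    calc ball (f p.2) p.1 ⊆ ball (f y) r := ball_subset_ball' (by linarith)
      _ ⊆ f '' ball y (ε / 2) := hsub
      _ ⊆ f '' ball p.2 ε := image_mono (ball_subset_ball' (by rw [dist_comm]; linarith))
  have hunif : ∀ᶠ β in 𝓝 (0 : ℝ), ∀ x ∈ univ, ball (f x) β ⊆ f '' ball x ε :=
    isCompact_univ.eventually_forall_of_forall_eventually fun y _ => hloc y
  obtain ⟨β, hsub, hβ⟩ :=
    ((hunif.filter_mono (nhdsWithin_le_nhds (s := Ioi 0))).and eventually_mem_nhdsWithin).exists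
  exact ⟨β, hβ, fun x => hsub x (mem_univ x)⟩

theorem exists_contracting_preimage {X Y : Type*} [MetricSpace X] [CompactSpace X]
    [MetricSpace Y] {f : X → Y} (hf : Continuous f) (ho : IsOpenMap f) {δ μ : ℝ} (hδ : 0 < δ)
    (hexp : ∀ x y, dist x y < δ → μ * dist x y ≤ dist (f x) (f y)) :
    ∃ β > 0, ∀ x z, dist z (f x) < β → ∃ y, f y = z ∧ μ * dist y x ≤ dist z (f x) := by
  obtain ⟨β, hβ, hsub⟩ := ho.exists_ball_subset_image_ball hf hδ
  refine ⟨β, hβ, fun x z hz => ?_⟩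
  obtain ⟨y, hy, rfl⟩ := hsub x hz
  exact ⟨y, rfl, hexp y x hy⟩

theorem exists_shadowing_of_contracting_preimage {X : Type*} [MetricSpace X] {f : X → X}
    {β μ η δ : ℝ}
    (hpre : ∀ x z, dist z (f x) < β → ∃ y, f y = z ∧ μ * dist y x ≤ dist z (f x))
    (hμ : 0 < μ) (hη : 0 < η) (hβ : η + δ ≤ β) (hμη : η + δ ≤ μ * η) (m : ℕ) :
    ∀ x : ℕ → X, (∀ i < m, dist (f (x i)) (x (i + 1)) < δ) →
      ∃ y, (∀ i ≤ m, dist (f^[i] y) (x i) < η) ∧ f^[m] y = x m := by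
  induction m with
  | zero =>
    intro x _
    refine ⟨x 0, fun i hi => ?_, rfl⟩
    obtain rfl : i = 0 := Nat.le_zero.1 hi
    simpa using hη
  | succ m ih =>
    intro x hx
    obtain ⟨y', hy', hy'm⟩ := ih (fun i => x (i + 1)) fun i hi => hx (i + 1) (by omega)
    have hnear : dist y' (f (x 0)) < η + δ := by
      have h₀ : dist y' (x 1) < η := by simpa using hy' 0 m.zero_le
      calc dist y' (f (x 0)) ≤ dist y' (x 1) + dist (f (x 0)) (x 1) := dist_triangle_right _ _ _
        _ < η + δ := add_lt_add h₀ (hx 0 m.succ_pos)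
    obtain ⟨y, rfl, hy⟩ := hpre (x 0) y' (hnear.trans_le hβ)
    refine ⟨y, fun i hi => ?_, hy'm⟩
    cases i with
    | zero => simpa using lt_of_mul_lt_mul_left (by linarith) hμ.le
    | succ j => exact hy' j (by omega)

theorem stmt14 {X : Type*} [MetricSpace X] [CompactSpace X] (f : X → X)
    (hf : Continuous f) (hopen : OpenOnSet f Set.univ)
    (hexp : ExpandingOn f Set.univ) :
    HShadowingOn f Set.univ := by
  obtain ⟨δ₀, hδ₀, μ, hμ, hexp⟩ := hexp
  obtain ⟨β, hβ, hpre⟩ := exists_contracting_preimage hf hopen.isOpenMap hδ₀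
    fun x y => hexp x (mem_univ x) y (mem_univ y)
  intro ε hε
  set η := min ε (β / 2)
  have hη : 0 < η := lt_min hε (half_pos hβ)
  refine ⟨min ((μ - 1) * η) η, lt_min (mul_pos (sub_pos.2 hμ) hη) hη, fun x m _ hx => ?_⟩
  have hδμ := min_le_left ((μ - 1) * η) η
  have hδη := min_le_right ((μ - 1) * η) η
  have hηβ := min_le_right ε (β / 2)
  obtain ⟨y, hy, hym⟩ := exists_shadowing_of_contracting_preimage hpre (by linarith) hη
    (by linarith) (by linarith) m x hx
  exact ⟨y, fun i hi => (hy i hi.le).trans_le (min_le_left _ _), hym⟩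
end

section
/- Let f : [0,1] → [0,1] be continuous and let C be a closed, nowhere dense subset of [0,1] containing all critical points of f (points at which f fails to be locally one-to-one). Suppose f is continuously differentiable on (0,1) \ C with |f'(x)| > 1 for all x ∈ (0,1) \ C. If Λ is a closed subset of [0,1] disjoint from C ∪ {0,1}, then f has shadowing, s-limit shadowing and h-shadowing on Λ. -/
open Metric Filter Topology Set

/-- `f` has shadowing on `Y`, with shadowing points taken in `[0,1]`. -/
def ShadowingOnI (f : ℝ → ℝ) (Y : Set ℝ) : Prop :=
  ∀ ε > 0, ∃ δ > 0, ∀ x : ℕ → ℝ, (∀ n, x n ∈ Y) →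
    (∀ n : ℕ, |f (x n) - x (n + 1)| < δ) →
    ∃ y ∈ Set.Icc (0 : ℝ) 1, ∀ n : ℕ, |f^[n] y - x n| < ε

/-- `f` has h-shadowing on `Y`, with shadowing points taken in `[0,1]`. -/
def HShadowingOnI (f : ℝ → ℝ) (Y : Set ℝ) : Prop :=
  ∀ ε > 0, ∃ δ > 0, ∀ (x : ℕ → ℝ) (m : ℕ), (∀ i ≤ m, x i ∈ Y) →
    (∀ i < m, |f (x i) - x (i + 1)| < δ) →
    ∃ y ∈ Set.Icc (0 : ℝ) 1, (∀ i < m, |f^[i] y - x i| < ε) ∧ f^[m] y = x m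

/-- `f` has s-limit shadowing on `Y`, with shadowing points taken in `[0,1]`. -/
def SLimitShadowingOnI (f : ℝ → ℝ) (Y : Set ℝ) : Prop :=
  ∀ ε > 0, ∃ δ > 0,
    (∀ x : ℕ → ℝ, (∀ n, x n ∈ Y) → (∀ n : ℕ, |f (x n) - x (n + 1)| < δ) →
      ∃ y ∈ Set.Icc (0 : ℝ) 1, ∀ n : ℕ, |f^[n] y - x n| < ε) ∧
    (∀ x : ℕ → ℝ, (∀ n, x n ∈ Y) → (∀ n : ℕ, |f (x n) - x (n + 1)| < δ) →
      Filter.Tendsto (fun n => |f (x n) - x (n + 1)|) Filter.atTop (nhds 0) →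
      ∃ y ∈ Set.Icc (0 : ℝ) 1, (∀ n : ℕ, |f^[n] y - x n| < ε) ∧
        Filter.Tendsto (fun n => |f^[n] y - x n|) Filter.atTop (nhds 0))

/-!
Away from `C ∪ {0, 1}` the map is uniformly expanding: on a closed `ρ`-neighbourhood of `Λ`
one has `|f'| ≥ c > 1`, so by the mean value theorem `f` maps the ball of radius `t ≤ ρ` about a
point of `Λ` onto a set containing the ball of radius `c t` about its image. Pulling a finite
`δ`-pseudo-orbit back through these balls from its last point gives a true orbit that ends
exactly at `x_m` and stays within `δ / (c - 1)` of the pseudo-orbit (h-shadowing); compactness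
passes to infinite pseudo-orbits, and running the same construction with the tail suprema of the
errors in place of `δ` makes the shadowing asymptotic.
-/

def CoversBallsOn {X : Type*} [PseudoMetricSpace X] (f : X → X) (Λ : Set X) (c ρ : ℝ) : Prop :=
  ∀ x ∈ Λ, ∀ t ≤ ρ, closedBall (f x) (c * t) ⊆ f '' closedBall x t

section Real

variable {f f' : ℝ → ℝ} {c : ℝ}

theorem mul_sub_le_abs_sub_of_le_abs_deriv {a b : ℝ} (hab : a ≤ b)
    (hf : ∀ p ∈ Icc a b, HasDerivAt f (f' p) p) (hc : ∀ p ∈ Icc a b, c ≤ |f' p|) :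
    c * (b - a) ≤ |f b - f a| := by
  rcases hab.eq_or_lt with rfl | hlt
  · simp
  obtain ⟨p, hp, hslope⟩ := exists_hasDerivAt_eq_slope f f' hlt
    (fun p hp => (hf p hp).continuousAt.continuousWithinAt)
    (fun p hp => hf p (Ioo_subset_Icc_self hp))
  have hdiff : f b - f a = f' p * (b - a) := by
    rw [hslope, div_mul_cancel₀ _ (sub_ne_zero.2 hlt.ne')]
  calc c * (b - a) ≤ |f' p| * (b - a) :=
        mul_le_mul_of_nonneg_right (hc p (Ioo_subset_Icc_self hp)) (sub_nonneg.2 hab)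
    _ = |f b - f a| := by rw [hdiff, abs_mul, abs_of_pos (sub_pos.2 hlt)]

theorem injOn_of_pos_le_abs_deriv {a b : ℝ} (hc : 0 < c)
    (hf : ∀ p ∈ Icc a b, HasDerivAt f (f' p) p) (hcf : ∀ p ∈ Icc a b, c ≤ |f' p|) :
    InjOn f (Icc a b) := by
  have key : ∀ u ∈ Icc a b, ∀ v ∈ Icc a b, u ≤ v → f u = f v → u = v := by
    intro u hu v hv huv hfuv
    have hsub : Icc u v ⊆ Icc a b := Icc_subset_Icc hu.1 hv.2
    have := mul_sub_le_abs_sub_of_le_abs_deriv huv (fun p hp => hf p (hsub hp))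
      (fun p hp => hcf p (hsub hp))
    rw [hfuv, sub_self, abs_zero] at this
    nlinarith
  intro u hu v hv hfuv
  rcases le_total u v with huv | hvu
  · exact key u hu v hv huv hfuv
  · exact (key v hv u hu hvu hfuv.symm).symm

theorem closedBall_mul_subset_image_closedBall {x t : ℝ} (hc : 0 < c)
    (hf : ∀ p ∈ closedBall x t, HasDerivAt f (f' p) p)
    (hcf : ∀ p ∈ closedBall x t, c ≤ |f' p|) :
    closedBall (f x) (c * t) ⊆ f '' closedBall x t := by
  rw [Real.closedBall_eq_Icc] at hf hcf ⊢
  rw [Real.closedBall_eq_Icc]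
  intro z hz
  have ht : 0 ≤ t := by nlinarith [hz.1.trans hz.2]
  have hle : x - t ≤ x + t := by linarith
  have hcont : ContinuousOn f (Icc (x - t) (x + t)) :=
    fun p hp => (hf p hp).continuousAt.continuousWithinAt
  have hleft := mul_sub_le_abs_sub_of_le_abs_deriv (b := x) (by linarith)
    (fun p hp => hf p ⟨hp.1, by linarith [hp.2]⟩) (fun p hp => hcf p ⟨hp.1, by linarith [hp.2]⟩)
  have hright := mul_sub_le_abs_sub_of_le_abs_deriv (a := x) (b := x + t) (by linarith)
    (fun p hp => hf p ⟨by linarith [hp.1], hp.2⟩) (fun p hp => hcf p ⟨by linarith [hp.1], hp.2⟩)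
  have hx : x ∈ Icc (x - t) (x + t) := ⟨by linarith, by linarith⟩
  have hlo : x - t ∈ Icc (x - t) (x + t) := ⟨le_rfl, by linarith⟩
  have hhi : x + t ∈ Icc (x - t) (x + t) := ⟨by linarith, le_rfl⟩
  have hz' : z ∈ uIcc (f (x - t)) (f (x + t)) := by
    rcases hcont.strictMonoOn_of_injOn_Icc' hle (injOn_of_pos_le_abs_deriv hc hf hcf)
      with hmono | hanti
    · rw [abs_of_nonneg (sub_nonneg.2 (hmono.monotoneOn hlo hx (by linarith)))] at hleft
      rw [abs_of_nonneg (sub_nonneg.2 (hmono.monotoneOn hx hhi (by linarith)))] at hright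
      exact Icc_subset_uIcc ⟨by linarith [hz.1], by linarith [hz.2]⟩
    · rw [abs_of_nonpos (sub_nonpos.2 (hanti.antitoneOn hlo hx (by linarith)))] at hleft
      rw [abs_of_nonpos (sub_nonpos.2 (hanti.antitoneOn hx hhi (by linarith)))] at hright
      exact Icc_subset_uIcc' ⟨by linarith [hz.1], by linarith [hz.2]⟩
  rw [← uIcc_of_le hle] at hcont ⊢
  exact intermediate_value_uIcc hcont hz'

end Real

namespace CoversBallsOn

variable {X : Type*} [PseudoMetricSpace X] {f : X → X} {Λ : Set X} {c ρ : ℝ}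

theorem exists_iterate_eq_of_dist_le (hcov : CoversBallsOn f Λ c ρ) (hc : 1 < c) (m : ℕ)
    {x : ℕ → X} {E : ℕ → ℝ} (hx : ∀ i ≤ m, x i ∈ Λ) (hE : Antitone E) (hE0 : ∀ i, 0 ≤ E i)
    (hEρ : E 0 ≤ (c - 1) * ρ) (hxE : ∀ i < m, dist (f (x i)) (x (i + 1)) ≤ E i) :
    ∃ y, f^[m] y = x m ∧ ∀ i ≤ m, dist (f^[i] y) (x i) ≤ E i / (c - 1) := by
  have hc1 : 0 < c - 1 := sub_pos.2 hc
  induction m generalizing x E with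
  | zero =>
    refine ⟨x 0, rfl, fun i hi => ?_⟩
    obtain rfl : i = 0 := Nat.le_zero.1 hi
    simpa using div_nonneg (hE0 0) hc1.le
  | succ m ih =>
    obtain ⟨z, hzm, hz⟩ := ih (x := fun i => x (i + 1)) (E := fun i => E (i + 1))
      (fun i hi => hx (i + 1) (by omega)) (fun i j hij => hE (by omega)) (fun i => hE0 _)
      ((hE (Nat.zero_le 1)).trans hEρ) (fun i hi => hxE (i + 1) (by omega))
    have hz0 : dist z (x 1) ≤ E 1 / (c - 1) := by simpa using hz 0 (Nat.zero_le m)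
    -- `E 0 / (c - 1)` is the fixed point of `r ↦ (r + E 0) / c`: one backward step keeps the bound
    have hzf : dist z (f (x 0)) ≤ c * (E 0 / (c - 1)) :=
      calc dist z (f (x 0)) ≤ dist z (x 1) + dist (f (x 0)) (x 1) := dist_triangle_right _ _ _
        _ ≤ E 0 / (c - 1) + E 0 :=
          add_le_add (hz0.trans (div_le_div_of_nonneg_right (hE (Nat.zero_le 1)) hc1.le))
            (hxE 0 (Nat.zero_lt_succ m))
        _ = c * (E 0 / (c - 1)) := by field_simp; ring
    obtain ⟨y, hy, hfy⟩ := hcov (x 0) (hx 0 (Nat.zero_le _)) _ ((div_le_iff₀' hc1).2 hEρ) hzf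
    refine ⟨y, by rw [Function.iterate_succ_apply, hfy, hzm], fun i hi => ?_⟩
    cases i with
    | zero => simpa using hy
    | succ i =>
      rw [Function.iterate_succ_apply, hfy]
      exact hz i (by omega)

theorem exists_dist_iterate_le [ProperSpace X] (hcov : CoversBallsOn f Λ c ρ) (hc : 1 < c)
    {s : Set X} (hs : IsClosed s) (hfs : MapsTo f s s) (hf : ContinuousOn f s)
    (hΛs : ∀ x ∈ Λ, closedBall x ρ ⊆ s) {x : ℕ → X} {E : ℕ → ℝ} (hx : ∀ n, x n ∈ Λ)
    (hE : Antitone E) (hE0 : ∀ n, 0 ≤ E n) (hEρ : E 0 ≤ (c - 1) * ρ)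
    (hxE : ∀ n, dist (f (x n)) (x (n + 1)) ≤ E n) :
    ∃ y ∈ s, ∀ n, dist (f^[n] y) (x n) ≤ E n / (c - 1) := by
  set A : ℕ → Set X := fun n => s ∩ f^[n] ⁻¹' closedBall (x n) (E n / (c - 1))
  have hA : ∀ n, IsClosed (A n) := fun n =>
    (hf.iterate hfs n).preimage_isClosed_of_isClosed hs isClosed_closedBall
  obtain ⟨y, -, hy⟩ := (isCompact_closedBall (x 0) ρ).inter_iInter_nonempty A hA fun u => by
    obtain ⟨y, -, hy⟩ := hcov.exists_iterate_eq_of_dist_le hc (u.sup id) (fun i _ => hx i)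
      hE hE0 hEρ (fun i _ => hxE i)
    have hy0 : y ∈ closedBall (x 0) ρ :=
      (hy 0 (Nat.zero_le _)).trans ((div_le_iff₀' (sub_pos.2 hc)).2 hEρ)
    exact ⟨y, hy0, mem_iInter₂.2 fun i hi =>
      ⟨hΛs _ (hx 0) hy0, hy i (Finset.le_sup (f := id) hi)⟩⟩
  exact ⟨y, (mem_iInter.1 hy 0).1, fun n => (mem_iInter.1 hy n).2⟩

end CoversBallsOn

theorem exists_antitone_ge_tendsto_zero {g : ℕ → ℝ} {δ : ℝ} (hgδ : ∀ n, g n ≤ δ)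
    (hg : Tendsto g atTop (𝓝 0)) :
    ∃ E : ℕ → ℝ, Antitone E ∧ (∀ n, g n ≤ E n) ∧ (∀ n, E n ≤ δ) ∧ Tendsto E atTop (𝓝 0) := by
  have hbdd : ∀ n, BddAbove (range fun k => g (n + k)) :=
    fun n => ⟨δ, by rintro _ ⟨k, rfl⟩; exact hgδ _⟩
  have hle : ∀ n k, g (n + k) ≤ ⨆ k, g (n + k) := fun n k => le_ciSup (hbdd n) k
  refine ⟨fun n => ⨆ k, g (n + k), fun i j hij => ciSup_le fun k => ?_,
    fun n => by simpa using hle n 0, fun n => ciSup_le fun k => hgδ _, ?_⟩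
  · simpa [show i + (j - i + k) = j + k by omega] using hle i (j - i + k)
  refine tendsto_order.2 ⟨fun a ha => ?_, fun a ha => ?_⟩
  · filter_upwards [hg.eventually (lt_mem_nhds ha)] with n hn
    exact hn.trans_le (by simpa using hle n 0)
  · obtain ⟨N, hN⟩ := eventually_atTop.1 (hg.eventually (ge_mem_nhds (half_pos ha)))
    filter_upwards [eventually_ge_atTop N] with n hn
    exact (ciSup_le fun k => hN (n + k) (by omega)).trans_lt (half_lt_self ha)

theorem SLimitShadowingOnI.shadowingOnI {f : ℝ → ℝ} {Y : Set ℝ} (h : SLimitShadowingOnI f Y) :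
    ShadowingOnI f Y := fun ε hε =>
  let ⟨δ, hδ, hshadow, _⟩ := h ε hε
  ⟨δ, hδ, hshadow⟩

namespace CoversBallsOn

variable {f : ℝ → ℝ} {Λ : Set ℝ} {c ρ : ℝ}

theorem exists_abs_iterate_sub_lt (hcov : CoversBallsOn f Λ c ρ) (hc : 1 < c)
    (hmaps : MapsTo f (Icc 0 1) (Icc 0 1)) (hcont : ContinuousOn f (Icc 0 1))
    (hΛ : ∀ x ∈ Λ, closedBall x ρ ⊆ Icc 0 1) {ε : ℝ} (hε : 0 < ε) {x : ℕ → ℝ} {E : ℕ → ℝ}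
    (hx : ∀ n, x n ∈ Λ) (hE : Antitone E) (hE0 : ∀ n, 0 ≤ E n)
    (hEε : ∀ n, E n ≤ (c - 1) * min ρ (ε / 2)) (hxE : ∀ n, |f (x n) - x (n + 1)| ≤ E n) :
    ∃ y ∈ Icc (0 : ℝ) 1, ∀ n, |f^[n] y - x n| < ε ∧ |f^[n] y - x n| ≤ E n / (c - 1) := by
  have hc1 : 0 < c - 1 := sub_pos.2 hc
  obtain ⟨y, hy, hyx⟩ := hcov.exists_dist_iterate_le hc isClosed_Icc hmaps hcont hΛ hx hE hE0
    ((hEε 0).trans (mul_le_mul_of_nonneg_left (min_le_left _ _) hc1.le)) hxE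
  refine ⟨y, hy, fun n => ⟨(hyx n).trans_lt ?_, hyx n⟩⟩
  calc E n / (c - 1) ≤ (c - 1) * min ρ (ε / 2) / (c - 1) := by gcongr; exact hEε n
    _ = min ρ (ε / 2) := mul_div_cancel_left₀ _ hc1.ne'
    _ < ε := (min_le_right _ _).trans_lt (half_lt_self hε)

theorem sLimitShadowingOnI (hcov : CoversBallsOn f Λ c ρ) (hc : 1 < c) (hρ : 0 < ρ)
    (hmaps : MapsTo f (Icc 0 1) (Icc 0 1)) (hcont : ContinuousOn f (Icc 0 1))
    (hΛ : ∀ x ∈ Λ, closedBall x ρ ⊆ Icc 0 1) : SLimitShadowingOnI f Λ := by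
  intro ε hε
  have hδ : 0 < (c - 1) * min ρ (ε / 2) := mul_pos (sub_pos.2 hc) (lt_min hρ (half_pos hε))
  refine ⟨_, hδ, fun x hx hxδ => ?_, fun x hx hxδ hx0 => ?_⟩
  · obtain ⟨y, hy, hyx⟩ := hcov.exists_abs_iterate_sub_lt hc hmaps hcont hΛ hε hx antitone_const
      (fun _ => hδ.le) (fun _ => le_rfl) (fun n => (hxδ n).le)
    exact ⟨y, hy, fun n => (hyx n).1⟩
  · obtain ⟨E, hE, hgE, hEδ, hE0⟩ := exists_antitone_ge_tendsto_zero (fun n => (hxδ n).le) hx0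
    obtain ⟨y, hy, hyx⟩ := hcov.exists_abs_iterate_sub_lt hc hmaps hcont hΛ hε hx hE
      (fun n => (abs_nonneg _).trans (hgE n)) hEδ hgE
    refine ⟨y, hy, fun n => (hyx n).1, squeeze_zero (fun n => abs_nonneg _) (fun n => (hyx n).2) ?_⟩
    simpa using hE0.div_const (c - 1)

theorem hShadowingOnI (hcov : CoversBallsOn f Λ c ρ) (hc : 1 < c) (hρ : 0 < ρ)
    (hΛ : ∀ x ∈ Λ, closedBall x ρ ⊆ Icc 0 1) : HShadowingOnI f Λ := by
  intro ε hε
  have hc1 : 0 < c - 1 := sub_pos.2 hc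
  have hδ : 0 < (c - 1) * min ρ (ε / 2) := mul_pos hc1 (lt_min hρ (half_pos hε))
  refine ⟨_, hδ, fun x m hx hxδ => ?_⟩
  obtain ⟨y, hym, hyx⟩ := hcov.exists_iterate_eq_of_dist_le hc m hx antitone_const
    (fun _ => hδ.le) (mul_le_mul_of_nonneg_left (min_le_left _ _) hc1.le) fun i hi => (hxδ i hi).le
  rw [mul_div_cancel_left₀ _ hc1.ne'] at hyx
  refine ⟨y, hΛ _ (hx 0 (Nat.zero_le m)) ((hyx 0 (Nat.zero_le m)).trans (min_le_left _ _)),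
    fun i hi => (hyx i hi.le).trans_lt ((min_le_right _ _).trans_lt (half_lt_self hε)), hym⟩

end CoversBallsOn

theorem stmt15_general (f : ℝ → ℝ) (C Λ : Set ℝ)
    (hmaps : Set.MapsTo f (Set.Icc 0 1) (Set.Icc 0 1))
    (hcont : ContinuousOn f (Set.Icc 0 1))
    (hCclosed : IsClosed C)
    (f' : ℝ → ℝ)
    (hderiv : ∀ x ∈ Set.Ioo (0 : ℝ) 1 \ C, HasDerivAt f (f' x) x)
    (hderivcont : ContinuousOn f' (Set.Ioo (0 : ℝ) 1 \ C))
    (hgrad : ∀ x ∈ Set.Ioo (0 : ℝ) 1 \ C, 1 < |f' x|)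
    (hΛclosed : IsClosed Λ) (hΛsub : Λ ⊆ Set.Icc 0 1)
    (hΛdisj : Disjoint Λ (C ∪ {0, 1})) :
    ShadowingOnI f Λ ∧ SLimitShadowingOnI f Λ ∧ HShadowingOnI f Λ := by
  have hΛcpt : IsCompact Λ := isCompact_Icc.of_isClosed_subset hΛclosed hΛsub
  have hΛU : Λ ⊆ Ioo 0 1 \ C := fun x hx => by
    have hxS : x ∉ C ∪ {0, 1} := hΛdisj.notMem_of_mem_left hx
    simp only [mem_union, mem_insert_iff, mem_singleton_iff, not_or] at hxS
    exact ⟨⟨(hΛsub hx).1.lt_of_ne' hxS.2.1, (hΛsub hx).2.lt_of_ne hxS.2.2⟩, hxS.1⟩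
  obtain ⟨ρ, hρ, hρU⟩ := hΛcpt.exists_cthickening_subset_open (isOpen_Ioo.sdiff hCclosed) hΛU
  obtain ⟨c, hc, hcf'⟩ := hΛcpt.cthickening.exists_forall_le' (hderivcont.mono hρU).abs
    fun p hp => hgrad p (hρU hp)
  have hball : ∀ x ∈ Λ, closedBall x ρ ⊆ Ioo 0 1 \ C := fun x hx =>
    (closedBall_subset_cthickening hx ρ).trans hρU
  have hcov : CoversBallsOn f Λ c ρ := fun x hx t ht =>
    have hsub : closedBall x t ⊆ closedBall x ρ := closedBall_subset_closedBall ht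
    closedBall_mul_subset_image_closedBall (by linarith)
      (fun p hp => hderiv p (hball x hx (hsub hp)))
      fun p hp => hcf' p (closedBall_subset_cthickening hx ρ (hsub hp))
  have hΛI : ∀ x ∈ Λ, closedBall x ρ ⊆ Icc 0 1 := fun x hx =>
    (hball x hx).trans (sdiff_subset.trans Ioo_subset_Icc_self)
  have hslim := hcov.sLimitShadowingOnI hc hρ hmaps hcont hΛI
  exact ⟨hslim.shadowingOnI, hslim, hcov.hShadowingOnI hc hρ hΛI⟩

theorem stmt15 (f : ℝ → ℝ) (C Λ : Set ℝ)
    (hmaps : Set.MapsTo f (Set.Icc 0 1) (Set.Icc 0 1))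
    (hcont : ContinuousOn f (Set.Icc 0 1))
    (hCsub : C ⊆ Set.Icc 0 1) (hCclosed : IsClosed C)
    (hCnwd : interior C = ∅)
    (hcrit : ∀ x ∈ Set.Icc (0 : ℝ) 1, x ∉ C →
      ∃ V : Set ℝ, IsOpen V ∧ x ∈ V ∧ Set.InjOn f (V ∩ Set.Icc 0 1))
    (f' : ℝ → ℝ)
    (hderiv : ∀ x ∈ Set.Ioo (0 : ℝ) 1 \ C, HasDerivAt f (f' x) x)
    (hderivcont : ContinuousOn f' (Set.Ioo (0 : ℝ) 1 \ C))
    (hgrad : ∀ x ∈ Set.Ioo (0 : ℝ) 1 \ C, 1 < |f' x|)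
    (hΛclosed : IsClosed Λ) (hΛsub : Λ ⊆ Set.Icc 0 1)
    (hΛdisj : Disjoint Λ (C ∪ {0, 1})) :
    ShadowingOnI f Λ ∧ SLimitShadowingOnI f Λ ∧ HShadowingOnI f Λ :=
  stmt15_general f C Λ hmaps hcont hCclosed f' hderiv hderivcont hgrad hΛclosed hΛsub hΛdisj
end

section
/- Let (X,d) be a compact metric space and let f : X → X be a homeomorphism. Then f has shadowing and f⁻¹ is equicontinuous if and only if f is equicontinuous and X is totally disconnected. -/
open Metric Filter Topology Set

section Defs

variable {X : Type*} [MetricSpace X]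

/-- all iterates of `g` are uniformly equicontinuous. -/
def EquicontinuousIter (g : X → X) : Prop :=
  ∀ ε > 0, ∃ δ > 0, ∀ x y : X, dist x y < δ → ∀ n : ℕ, dist (g^[n] x) (g^[n] y) < ε

end Defs

/-!
Uniform recurrence: if `f` has equicontinuous iterates on a compact space, the sequence of
iterates restricted to a finite net lies in a compact space, so some `f^[k + m]` with `k ≥ n` is
uniformly close to `f^[m]`. For a bijection this makes `f.symm^[n]` uniformly close to a forward
iterate, whence the backward iterates are equicontinuous as well.

If `X` is totally disconnected, there is a finite clopen partition into pieces of diameter `< ε`,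
and by equicontinuity `δ`-close points have the same itinerary through it forever. By induction the
orbit of the first point of a `δ`-pseudo-orbit has the same itinerary as the pseudo-orbit, so it
`ε`-shadows it. Conversely, with shadowing and two-sided equicontinuity, an `η`-chain `c` from `a`
to `b` inside a connected set gives the pseudo-orbit `f^[i] (c i)`; its shadowing point is close to
`a`, and, pulling back by `f.symm^[m]`, close to `b`. Hence connected sets are singletons.
-/

open Function

section Recurrence

variable {X : Type*} [MetricSpace X] [CompactSpace X]

theorem exists_dist_apply_add_lt (u : ℕ → X) {τ : ℝ} (hτ : 0 < τ) (N : ℕ) :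
    ∃ m k, N ≤ k ∧ dist (u m) (u (k + m)) < τ := by
  obtain ⟨_, φ, hφ, hlim⟩ := CompactSpace.tendsto_subseq u
  obtain ⟨M, hM⟩ := Metric.cauchySeq_iff'.1 hlim.cauchySeq τ hτ
  have hM_le : M ≤ φ M := hφ.le_apply
  have hgap : φ M + N ≤ φ (φ M + N) := hφ.le_apply
  refine ⟨φ M, φ (φ M + N) - φ M, by omega, ?_⟩
  rw [Nat.sub_add_cancel (by omega), dist_comm]
  exact hM _ (by omega)

namespace EquicontinuousIter

theorem exists_dist_iterate_add_lt {f : X → X} (hf : EquicontinuousIter f) {τ : ℝ} (hτ : 0 < τ)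
    (N : ℕ) : ∃ m k, N ≤ k ∧ ∀ z, dist (f^[m] z) (f^[k + m] z) < τ := by
  obtain ⟨δ, hδ, hfδ⟩ := hf (τ / 3) (by positivity)
  obtain ⟨F, -, hF, hcover⟩ := finite_cover_balls_of_compact (isCompact_univ (X := X)) hδ
  have := hF.fintype
  -- On the finite `δ`-net `F`, recurrence of the orbit comes from compactness of `F → X`.
  obtain ⟨m, k, hk, hmk⟩ :=
    exists_dist_apply_add_lt (fun n (p : F) => f^[n] p) (by positivity : 0 < τ / 3) N
  refine ⟨m, k, hk, fun z => ?_⟩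
  obtain ⟨p, hp, hzp⟩ := mem_iUnion₂.1 (hcover (mem_univ z))
  have hzp : dist z p < δ := hzp
  calc dist (f^[m] z) (f^[k + m] z)
      ≤ dist (f^[m] z) (f^[m] p) + dist (f^[m] p) (f^[k + m] p)
        + dist (f^[k + m] p) (f^[k + m] z) := dist_triangle4 _ _ _ _
    _ < τ / 3 + τ / 3 + τ / 3 := by
        gcongr
        · exact hfδ z p hzp m
        · exact (dist_pi_lt_iff (by positivity)).1 hmk ⟨p, hp⟩
        · exact dist_comm (f^[k + m] z) _ ▸ hfδ z p hzp (k + m)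
    _ = τ := by ring

theorem exists_dist_symm_iterate_lt {f : X ≃ X} (hf : EquicontinuousIter f) {τ : ℝ}
    (hτ : 0 < τ) (n : ℕ) : ∃ j, ∀ x, dist (f.symm^[n] x) (f^[j] x) < τ := by
  obtain ⟨m, k, hk, hmk⟩ := hf.exists_dist_iterate_add_lt hτ n
  obtain ⟨j, rfl⟩ := Nat.exists_eq_add_of_le' hk
  refine ⟨j, fun x => ?_⟩
  have h := hmk (f.symm^[m] (f.symm^[n] x))
  rwa [f.rightInverse_symm.iterate m, iterate_add_apply, iterate_add_apply,
    f.rightInverse_symm.iterate m, f.rightInverse_symm.iterate n] at h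

theorem symm {f : X ≃ X} (hf : EquicontinuousIter f) : EquicontinuousIter f.symm := by
  intro ε hε
  obtain ⟨δ, hδ, hfδ⟩ := hf (ε / 3) (by positivity)
  refine ⟨δ, hδ, fun x y hxy n => ?_⟩
  obtain ⟨j, hj⟩ := hf.exists_dist_symm_iterate_lt (by positivity : 0 < ε / 3) n
  calc dist (f.symm^[n] x) (f.symm^[n] y)
      ≤ dist (f.symm^[n] x) (f^[j] x) + dist (f^[j] x) (f^[j] y) + dist (f^[j] y) (f.symm^[n] y) :=
        dist_triangle4 _ _ _ _
    _ < ε / 3 + ε / 3 + ε / 3 := by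
        gcongr
        · exact hj x
        · exact hfδ x y hxy j
        · exact dist_comm (f.symm^[n] y) _ ▸ hj y
    _ = ε := by ring

end EquicontinuousIter

end Recurrence

section Connected

variable {X : Type*} [MetricSpace X]

theorem IsPreconnected.exists_chain_dist_lt {s : Set X} (hs : IsPreconnected s) {a b : X}
    (ha : a ∈ s) (hb : b ∈ s) {η : ℝ} (hη : 0 < η) :
    ∃ (m : ℕ) (c : ℕ → X), c 0 = a ∧ c m = b ∧ ∀ i, dist (c i) (c (i + 1)) < η := by
  set S := {y | ∃ (m : ℕ) (c : ℕ → X), c 0 = a ∧ c m = y ∧ ∀ i, dist (c i) (c (i + 1)) < η}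
  have hstep : ∀ y z, y ∈ S → dist y z < η → z ∈ S := by
    rintro y z ⟨m, c, hc0, hcm, hc⟩ hyz
    refine ⟨m + 1, fun i => if i ≤ m then c i else z, by simpa using hc0, by simp, fun i => ?_⟩
    rcases lt_trichotomy i m with hi | rfl | hi
    · simpa [hi.le, Nat.succ_le_of_lt hi] using hc i
    · simpa [hcm] using hyz
    · simpa [hi.not_ge, (hi.trans (Nat.lt_succ_self i)).not_ge] using hη
  have hS : IsClopen S := by
    refine ⟨isClosed_of_closure_subset fun y hy => ?_,
      Metric.isOpen_iff.2 fun y hy => ⟨η, hη, fun z hz => hstep y z hy (mem_ball'.1 hz)⟩⟩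
    obtain ⟨z, hz, hyz⟩ := Metric.mem_closure_iff.1 hy η hη
    exact hstep z y hz (dist_comm y z ▸ hyz)
  exact hs.subset_isClopen hS ⟨a, ha, 0, fun _ => a, rfl, rfl, fun _ => by simpa using hη⟩ hb

theorem totallyDisconnectedSpace_of_shadowingOn {f : X ≃ X} (hsh : ShadowingOn f univ)
    (hf : EquicontinuousIter f) (hf' : EquicontinuousIter f.symm) :
    TotallyDisconnectedSpace X := by
  refine ⟨fun s _ hs a ha b hb => eq_of_forall_dist_le fun ε hε => ?_⟩
  obtain ⟨δ', hδ', hf'δ'⟩ := hf' (ε / 2) (half_pos hε)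
  obtain ⟨δ, hδ, hshδ⟩ := hsh (min (ε / 2) δ') (lt_min (half_pos hε) hδ')
  obtain ⟨η, hη, hfη⟩ := hf δ hδ
  obtain ⟨m, c, rfl, rfl, hc⟩ := hs.exists_chain_dist_lt ha hb hη
  -- Pushing the `η`-chain forward, the `i`-th link by `f^[i]`, yields a `δ`-pseudo-orbit.
  obtain ⟨y, hy⟩ := hshδ (fun i => f^[i] (c i)) (fun _ => mem_univ _) fun i => by
    simpa only [← iterate_succ_apply' f] using hfη _ _ (hc i) (i + 1)
  have h0 : dist y (c 0) < ε / 2 := lt_of_lt_of_le (hy 0) (min_le_left _ _)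
  have hm : dist y (c m) < ε / 2 := by
    simpa only [f.leftInverse_symm.iterate m _] using
      hf'δ' _ _ (lt_of_lt_of_le (hy m) (min_le_right _ _)) m
  linarith [dist_triangle_left (c 0) (c m) y]

end Connected

section TotallyDisconnected

variable {X : Type*} [MetricSpace X] [CompactSpace X]

theorem IsLocallyConstant.exists_pos_forall_dist_lt_imp_eq {ι : Type*} {π : X → ι}
    (hπ : IsLocallyConstant π) : ∃ γ > 0, ∀ x y, dist x y < γ → π x = π y := by
  obtain ⟨γ, hγ, hball⟩ := lebesgue_number_lemma_of_metric isCompact_univ hπ.isOpen_fiber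
    fun x _ => mem_iUnion.2 ⟨π x, rfl⟩
  refine ⟨γ, hγ, fun x y hxy => ?_⟩
  obtain ⟨i, hi⟩ := hball x (mem_univ x)
  exact (hi (mem_ball_self hγ)).trans (hi (mem_ball'.2 hxy)).symm

theorem DiscreteQuotient.exists_forall_proj_eq_imp_dist_lt [TotallyDisconnectedSpace X] {ε : ℝ}
    (hε : 0 < ε) : ∃ Q : DiscreteQuotient X, ∀ x y, Q.proj x = Q.proj y → dist x y < ε := by
  choose V hV hxV hVball using fun x : X =>
    compact_exists_isClopen_in_isOpen (isOpen_ball (x := x)) (mem_ball_self (half_pos hε))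
  obtain ⟨s, hs⟩ := isCompact_univ.elim_finite_subcover V (fun x => (hV x).isOpen)
    fun x _ => mem_iUnion.2 ⟨x, hxV x⟩
  refine ⟨s.inf fun z => ofIsClopen (hV z), fun x y hxy => ?_⟩
  obtain ⟨z, hz, hxz⟩ := mem_iUnion₂.1 (hs (mem_univ x))
  have hle : s.inf (fun z => ofIsClopen (hV z)) ≤ ofIsClopen (hV z) :=
    Finset.inf_le (f := fun z => ofIsClopen (hV z)) hz
  have hproj : (ofIsClopen (hV z)).proj x = (ofIsClopen (hV z)).proj y := by
    rw [← ofLE_proj hle, hxy, ofLE_proj]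
  have hyz : y ∈ V z := (Quotient.exact' hproj).1 hxz
  calc dist x y ≤ dist x z + dist y z := dist_triangle_right x y z
    _ < ε / 2 + ε / 2 := add_lt_add (hVball z hxz) (hVball z hyz)
    _ = ε := add_halves ε

theorem shadowingOn_univ_of_equicontinuousIter [TotallyDisconnectedSpace X] {f : X → X}
    (hf : EquicontinuousIter f) : ShadowingOn f univ := by
  intro ε hε
  obtain ⟨Q, hQ⟩ := DiscreteQuotient.exists_forall_proj_eq_imp_dist_lt (X := X) hε
  obtain ⟨γ, hγ, hγQ⟩ := Q.proj_isLocallyConstant.exists_pos_forall_dist_lt_imp_eq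
  obtain ⟨δ, hδ, hfδ⟩ := hf γ hγ
  refine ⟨δ, hδ, fun x _ hx => ⟨x 0, fun n => hQ _ _ ?_⟩⟩
  -- The itineraries through the fibres of `Q` of the orbit of `x 0` and of the pseudo-orbit agree.
  suffices ∀ n k, Q.proj (f^[k] (f^[n] (x 0))) = Q.proj (f^[k] (x n)) from this n 0
  intro n
  induction n with
  | zero => exact fun _ => rfl
  | succ n ih =>
    intro k
    rw [iterate_succ_apply', ← iterate_succ_apply f k, ih, iterate_succ_apply]
    exact hγQ _ _ (hfδ _ _ (hx n) k)

end TotallyDisconnected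

theorem stmt18 {X : Type*} [MetricSpace X] [CompactSpace X] (f : X ≃ₜ X) :
    (ShadowingOn (⇑f) Set.univ ∧ EquicontinuousIter (⇑f.symm)) ↔
      (EquicontinuousIter (⇑f) ∧ TotallyDisconnectedSpace X) := by
  constructor
  · rintro ⟨hsh, hf'⟩
    have hf : EquicontinuousIter f := EquicontinuousIter.symm (f := f.symm.toEquiv) hf'
    exact ⟨hf, totallyDisconnectedSpace_of_shadowingOn (f := f.toEquiv) hsh hf hf'⟩
  · rintro ⟨hf, _⟩
    exact ⟨shadowingOn_univ_of_equicontinuousIter hf, EquicontinuousIter.symm (f := f.toEquiv) hf⟩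
end

section
/- Let (X,d) be a compact metric space and let f : X → X be a homeomorphism. If f⁻¹ is equicontinuous, then every point of X is recurrent under f, i.e. for every x ∈ X and every ε > 0 there exist arbitrarily large n ∈ ℕ with d(f^n(x), x) < ε. -/
open Metric Filter Topology Set

/-!
The orbit of `x` under `f^(N+1)` has two `δ`-close points `f^(i(N+1)) x` and `f^(j(N+1)) x`
with `i < j`, by compactness. Pulling them back by `f^(-i(N+1))`, which moves `δ`-close points
by less than `ε` because `f⁻¹` is equicontinuous, gives `dist x (f^((j-i)(N+1)) x) < ε`.
-/

theorem exists_lt_dist_lt_of_compactSpace {X : Type*} [PseudoMetricSpace X] [CompactSpace X]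
    (u : ℕ → X) {δ : ℝ} (hδ : 0 < δ) :
    ∃ i j, i < j ∧ dist (u i) (u j) < δ := by
  obtain ⟨_, -, φ, hφ, hlim⟩ := isCompact_univ.tendsto_subseq (fun n ↦ mem_univ (u n))
  obtain ⟨K, hK⟩ := Metric.cauchySeq_iff'.mp hlim.cauchySeq δ hδ
  exact ⟨φ K, φ (K + 1), hφ K.lt_succ_self, dist_comm (u _) _ ▸ hK (K + 1) K.le_succ⟩

namespace EquicontinuousIter

variable {X : Type*} [MetricSpace X] {f g : X → X}

theorem iterate (hg : EquicontinuousIter g) (m : ℕ) : EquicontinuousIter g^[m] := by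
  intro ε hε
  obtain ⟨δ, hδ, hclose⟩ := hg ε hε
  exact ⟨δ, hδ, fun x y hxy n ↦ Function.iterate_mul g m n ▸ hclose x y hxy (m * n)⟩

theorem exists_pos_dist_iterate_lt [CompactSpace X] (hg : EquicontinuousIter g)
    (hgf : Function.LeftInverse g f) (x : X) {ε : ℝ} (hε : 0 < ε) :
    ∃ k, 0 < k ∧ dist (f^[k] x) x < ε := by
  obtain ⟨δ, hδ, hclose⟩ := hg ε hε
  obtain ⟨i, j, hij, hd⟩ := exists_lt_dist_lt_of_compactSpace (fun n ↦ f^[n] x) hδ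
  have hj : f^[j] x = f^[i] (f^[j - i] x) := by
    rw [← Function.iterate_add_apply, Nat.add_sub_cancel' hij.le]
  refine ⟨j - i, Nat.sub_pos_of_lt hij, ?_⟩
  have hpull := hclose _ _ hd i
  rwa [hj, hgf.iterate i, hgf.iterate i, dist_comm] at hpull

end EquicontinuousIter

theorem stmt19 {X : Type*} [MetricSpace X] [CompactSpace X] (f : X ≃ₜ X)
    (heq : EquicontinuousIter (⇑f.symm)) :
    ∀ x : X, ∀ ε > 0, ∀ N : ℕ, ∃ n : ℕ, N ≤ n ∧ dist ((⇑f)^[n] x) x < ε := by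
  intro x ε hε N
  obtain ⟨k, hk, hdist⟩ := (heq.iterate (N + 1)).exists_pos_dist_iterate_lt
    (Function.LeftInverse.iterate f.symm_apply_apply (N + 1)) x hε
  refine ⟨(N + 1) * k, N.le_succ.trans (Nat.le_mul_of_pos_right _ hk), ?_⟩
  rwa [Function.iterate_mul]
end
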